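/- arXiv:2410.18269 — 8 statements merged into one kernel-verified Lean document; each statement's English description precedes it below -/
import Mathlib

section
/- Let (G, c) be a finite connected electric network on vertex set V with all positive conductances distinct, and run Prim's invasion algorithm (repeatedly adding the maximal-conductance boundary edge) started at s, producing vertex sets W_0 ⊆ W_1 ⊆ … and edges g_1, …. Then for every k, every vertex a ∈ W_k, and every vertex b ∉ W_k, every edge e on the unique path in the invasion tree (W_k, {g_1,…,g_k}) between w_k (the k-th added vertex) and a satisfies c(e) > c(a,b). -/
/-- **Prim's invasion algorithm path lemma.**
On a finite connected electric network with pairwise distinct positive conductances,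
if Prim's invasion algorithm started at `s` produces vertices `w 0, w 1, ...`
(with explored sets `W k = {w 0, ..., w k}`) and edges `g 1, g 2, ...`, then for every
`k`, every `a ∈ W k` and `b ∉ W k` with `(a,b)` an edge, every edge on the unique
path in the invasion tree `(W k, {g 1, ..., g k})` between `w k` and `a` has
conductance strictly larger than `c s(a,b)`. -/
theorem stmt_0 {V : Type*} [Fintype V] [DecidableEq V]
    (G : SimpleGraph V) (hG : G.Connected)
    (c : Sym2 V → ℝ)
    (hpos : ∀ e ∈ G.edgeSet, 0 < c e)
    (hinj : ∀ e ∈ G.edgeSet, ∀ f ∈ G.edgeSet, c e = c f → e = f)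
    (s : V) (w : ℕ → V) (g : ℕ → Sym2 V)
    (W : ℕ → Set V) (hW : ∀ k, W k = {v | ∃ i ≤ k, w i = v})
    (hw0 : w 0 = s)
    (hstep : ∀ k, k + 1 < Fintype.card V →
      (∃ x ∈ W k, g (k + 1) = s(x, w (k + 1))) ∧
      w (k + 1) ∉ W k ∧
      g (k + 1) ∈ G.edgeSet ∧
      (∀ x y : V, x ∈ W k → y ∉ W k → G.Adj x y → s(x, y) ≠ g (k + 1) →
        c s(x, y) < c (g (k + 1)))) :
    ∀ k, k < Fintype.card V → ∀ a b : V, a ∈ W k → b ∉ W k → G.Adj a b →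
      ∀ p : G.Walk (w k) a, p.IsPath →
        (∀ e ∈ p.edges, ∃ i, 1 ≤ i ∧ i ≤ k ∧ g i = e) →
        ∀ e ∈ p.edges, c s(a, b) < c e := by
  have hWmono : ∀ {j l : ℕ}, j ≤ l → W j ⊆ W l := by
    intro j l hjl v hv
    rw [hW] at hv ⊢
    obtain ⟨i, hi, rfl⟩ := hv
    exact ⟨i, hi.trans hjl, rfl⟩
  have hmemW : ∀ j l : ℕ, j ≤ l → w j ∈ W l := by
    intro j l h
    rw [hW]
    exact ⟨j, h, rfl⟩
  -- endpoints of an edge `g j` with `1 ≤ j ≤ l` lie in `W l`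
  have hend : ∀ l : ℕ, l < Fintype.card V → ∀ j, 1 ≤ j → j ≤ l → ∀ u v : V,
      g j = s(u, v) → u ∈ W l ∧ v ∈ W l := by
    intro l hl j h1 hjl u v hguv
    obtain ⟨⟨x', hx', hg⟩, -, -, -⟩ := hstep (j - 1) (by omega)
    have hj : j - 1 + 1 = j := by omega
    rw [hj] at hg
    have h2 : s(u, v) = s(x', w j) := by rw [← hguv, hg]
    have hx'l : x' ∈ W l := hWmono (by omega) hx'
    have hwl : w j ∈ W l := hmemW j l hjl
    rcases Sym2.eq_iff.mp h2 with ⟨rfl, rfl⟩ | ⟨rfl, rfl⟩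
    · exact ⟨hx'l, hwl⟩
    · exact ⟨hwl, hx'l⟩
  -- every vertex on a walk whose edges are among `g 1, ..., g l` is the start or in `W l`
  have hsupp : ∀ l : ℕ, l < Fintype.card V → ∀ (u v : V) (r : G.Walk u v),
      (∀ e ∈ r.edges, ∃ j, 1 ≤ j ∧ j ≤ l ∧ g j = e) →
      ∀ z ∈ r.support, z = u ∨ z ∈ W l := by
    intro l hl u v r
    induction r with
    | nil =>
      intro _ z hz
      left
      simpa using hz
    | @cons u' y' v' h p ih =>
      intro hre z hz
      rw [SimpleGraph.Walk.support_cons] at hz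
      rcases List.mem_cons.mp hz with rfl | hz'
      · exact Or.inl rfl
      · right
        have hp : ∀ e ∈ p.edges, ∃ j, 1 ≤ j ∧ j ≤ l ∧ g j = e := by
          intro e he
          exact hre e (by rw [SimpleGraph.Walk.edges_cons]; exact List.mem_cons_of_mem _ he)
        have hfe : s(u', y') ∈ (SimpleGraph.Walk.cons h p).edges := by simp
        obtain ⟨j, h1, h2, h3⟩ := hre _ hfe
        have hy' : y' ∈ W l := (hend l hl j h1 h2 u' y' h3).2
        rcases ih hp z hz' with rfl | hzW
        · exact hy'
        · exact hzW
  -- a walk between distinct vertices has a first edge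
  have hfirst : ∀ (u v : V) (r : G.Walk u v), u ≠ v → ∃ z, s(u, z) ∈ r.edges := by
    intro u v r hne
    cases r with
    | nil => exact absurd rfl hne
    | @cons _ y' _ h p => exact ⟨y', by simp⟩
  -- main strengthened statement, by induction on k
  have main : ∀ k, k < Fintype.card V → ∀ x a b : V, b ∉ W k → G.Adj a b →
      (x = w k ∨ ∃ b', b' ∉ W k ∧ G.Adj x b' ∧ c s(a, b) < c s(x, b')) →
      ∀ q : G.Walk x a, q.IsPath →
        (∀ e ∈ q.edges, ∃ i, 1 ≤ i ∧ i ≤ k ∧ g i = e) →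
        ∀ e ∈ q.edges, c s(a, b) < c e := by
    intro k
    induction k with
    | zero =>
      intro _ x a b _ _ _ q _ hqe e he
      obtain ⟨i, h1, h0, _⟩ := hqe e he
      omega
    | succ k IH =>
      intro hk1 x a b hb hab hH q hq hqe e he
      obtain ⟨⟨x', hx'W, hgx'⟩, hwnot, hgE, hmax⟩ := hstep k hk1
      have hadjx' : G.Adj x' (w (k + 1)) := by
        rw [← SimpleGraph.mem_edgeSet, ← hgx']
        exact hgE
      have hx'ne : x' ≠ w (k + 1) := fun h => hwnot (h ▸ hx'W)
      have hbk : b ∉ W k := fun h => hb (hWmono (Nat.le_succ k) h)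
      -- maximality of g (k+1) against any edge from W k to outside W (k+1)
      have hmax' : ∀ a' b'' : V, a' ∈ W k → b'' ∉ W (k + 1) → G.Adj a' b'' →
          c s(a', b'') < c (g (k + 1)) := by
        intro a' b'' ha' hb'' hadj
        refine hmax a' b'' ha' (fun h => hb'' (hWmono (Nat.le_succ k) h)) hadj ?_
        intro hEq
        rw [hgx'] at hEq
        rcases Sym2.eq_iff.mp hEq with ⟨_, h2⟩ | ⟨_, h2⟩
        · exact hb'' (by rw [h2]; exact hmemW (k + 1) (k + 1) le_rfl)
        · exact hb'' (by rw [h2]; exact hWmono (Nat.le_succ k) hx'W)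
      -- any tree edge containing w (k+1) is g (k+1)
      have hinc : ∀ z : V, (∃ i, 1 ≤ i ∧ i ≤ k + 1 ∧ g i = s(w (k + 1), z)) →
          s(w (k + 1), z) = g (k + 1) := by
        rintro z ⟨j, h1, h2, h3⟩
        rcases Nat.lt_or_ge j (k + 1) with hlt | hge
        · exact absurd (hend k (by omega) j h1 (by omega) _ _ h3).1 hwnot
        · have hj : j = k + 1 := by omega
          rw [← h3, hj]
      -- key: walks starting at w (k+1)
      have key : ∀ a' b'' : V, b'' ∉ W (k + 1) → G.Adj a' b'' →
          ∀ q0 : G.Walk (w (k + 1)) a', q0.IsPath →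
            (∀ e ∈ q0.edges, ∃ i, 1 ≤ i ∧ i ≤ k + 1 ∧ g i = e) →
            ∀ e0 ∈ q0.edges, c s(a', b'') < c e0 := by
        intro a' b'' hb'' hadj q0 hq0 hq0e e0 he0
        cases q0 with
        | nil => simp at he0
        | @cons _ y _ h0 p0 =>
          have hfe : s(w (k + 1), y) ∈ (SimpleGraph.Walk.cons h0 p0).edges := by simp
          have hfeg : s(w (k + 1), y) = g (k + 1) := hinc y (hq0e _ hfe)
          have hyx : y = x' := by
            have h2 : s(x', w (k + 1)) = s(w (k + 1), y) := by rw [← hgx', ← hfeg]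
            rcases Sym2.eq_iff.mp h2 with ⟨h3, _⟩ | ⟨h4, _⟩
            · exact absurd h3 hx'ne
            · exact h4.symm
          subst hyx
          rw [SimpleGraph.Walk.cons_isPath_iff] at hq0
          obtain ⟨hp0, hwns⟩ := hq0
          have hp0e : ∀ e1 ∈ p0.edges, ∃ i, 1 ≤ i ∧ i ≤ k ∧ g i = e1 := by
            intro e1 he1
            obtain ⟨j, h1, h2, h3⟩ := hq0e e1
              (by rw [SimpleGraph.Walk.edges_cons]; exact List.mem_cons_of_mem _ he1)
            refine ⟨j, h1, ?_, h3⟩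
            by_contra hcon
            have hj : j = k + 1 := by omega
            rw [hj, hgx'] at h3
            exact hwns (SimpleGraph.Walk.snd_mem_support_of_mem_edges p0
              (by rw [h3]; exact he1))
          have ha'W : a' ∈ W k := by
            rcases hsupp k (by omega) y a' p0 hp0e a' p0.end_mem_support with rfl | hW'
            · exact hx'W
            · exact hW'
          have hlt1 : c s(a', b'') < c (g (k + 1)) := hmax' a' b'' ha'W hb'' hadj
          rw [SimpleGraph.Walk.edges_cons] at he0
          rcases List.mem_cons.mp he0 with rfl | he0'
          · rw [hfeg]
            exact hlt1
          · refine IH (by omega) y a' b'' (fun hm => hb'' (hWmono (Nat.le_succ k) hm))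
              hadj ?_ p0 hp0 hp0e e0 he0'
            exact Or.inr ⟨w (k + 1), hwnot, hadjx', by rw [← hgx']; exact hlt1⟩
      by_cases hxw : x = w (k + 1)
      · subst hxw
        exact key a b hb hab q hq hqe e he
      · by_cases haw : a = w (k + 1)
        · subst haw
          rcases hH with h | ⟨b', hb', hadb', hlt⟩
          · exact absurd h hxw
          · have hrev : ∀ e' ∈ q.reverse.edges, c s(x, b') < c e' := by
              refine key x b' hb' hadb' q.reverse hq.reverse ?_
              intro e' he'
              rw [SimpleGraph.Walk.edges_reverse, List.mem_reverse] at he'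
              exact hqe e' he'
            have he' : e ∈ q.reverse.edges := by
              rw [SimpleGraph.Walk.edges_reverse, List.mem_reverse]
              exact he
            exact lt_trans hlt (hrev e he')
        · by_cases hgB : g (k + 1) ∈ q.edges
          · exfalso
            have hsup : w (k + 1) ∈ q.support := by
              rw [hgx'] at hgB
              exact SimpleGraph.Walk.snd_mem_support_of_mem_edges q hgB
            have hspec := SimpleGraph.Walk.take_spec q hsup
            have hedges : q.edges
                = (q.takeUntil _ hsup).edges ++ (q.dropUntil _ hsup).edges := by
              conv_lhs => rw [← hspec]
              rw [SimpleGraph.Walk.edges_append]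
            have hnd := hq.edges_nodup
            rw [hedges] at hnd
            obtain ⟨z₁, hz₁⟩ := hfirst _ _ (q.takeUntil _ hsup).reverse (fun h => hxw h.symm)
            rw [SimpleGraph.Walk.edges_reverse, List.mem_reverse] at hz₁
            have hz₁g : s(w (k + 1), z₁) = g (k + 1) := by
              apply hinc
              apply hqe
              rw [hedges]
              exact List.mem_append_left _ hz₁
            obtain ⟨z₂, hz₂⟩ := hfirst _ _ (q.dropUntil _ hsup) (fun h => haw h.symm)
            have hz₂g : s(w (k + 1), z₂) = g (k + 1) := by
              apply hinc
              apply hqe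
              rw [hedges]
              exact List.mem_append_right _ hz₂
            have hdisj := List.disjoint_of_nodup_append hnd
            have hm1 : g (k + 1) ∈ (q.takeUntil _ hsup).edges := by
              rw [← hz₁g]; exact hz₁
            have hm2 : g (k + 1) ∈ (q.dropUntil _ hsup).edges := by
              rw [← hz₂g]; exact hz₂
            exact hdisj hm1 hm2
          · have hqe' : ∀ e' ∈ q.edges, ∃ i, 1 ≤ i ∧ i ≤ k ∧ g i = e' := by
              intro e' he'
              obtain ⟨j, h1, h2, h3⟩ := hqe e' he'
              refine ⟨j, h1, ?_, h3⟩
              by_contra hcon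
              have hj : j = k + 1 := by omega
              rw [hj] at h3
              exact hgB (by rw [h3]; exact he')
            refine IH (by omega) x a b hbk hab ?_ q hq hqe' e he
            rcases hH with h | ⟨b', hb', hadb', hlt⟩
            · exact absurd h hxw
            · exact Or.inr ⟨b', fun hm => hb' (hWmono (Nat.le_succ k) hm), hadb', hlt⟩
  intro k hk a b ha hb hab p hp hpe
  exact main k hk (w k) a b hb hab (Or.inl rfl) p hp hpe
end

section
/- Let c be pairwise-distinct positive conductances on the complete graph K_n and let MaxST(c) be the spanning tree maximizing ∏_{e∈T} c(e). Let ε₀ ∈ (0,1) and suppose there are m ≥ 1 edges e = (u,v) ∉ MaxST(c) that are ε₀-significant, i.e. some edge f on the path in MaxST(c) from u to v satisfies c(e)/c(f) ≥ ε₀. Then the weighted spanning tree measure, which assigns to each spanning tree T probability proportional to ∏_{e∈T} c(e), satisfies P(WST(c) = MaxST(c)) ≤ 1/(1 + m·ε₀). -/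
/-- `T` is a spanning tree of the graph `G`: its edges form a subset of `G`'s edges and
the graph generated by those edges is a tree on the full vertex set. -/
def IsSpanningTree {V : Type*} [Fintype V] (G : SimpleGraph V) (T : Finset (Sym2 V)) : Prop :=
  ↑T ⊆ G.edgeSet ∧ (SimpleGraph.fromEdgeSet (↑T : Set (Sym2 V))).IsTree

/-!
For each significant external edge `e = s(u, v)`, with `f` on the `T₀`-path from `u` to `v`
and `c e / c f ≥ ε₀`, the exchange `T₀ - f + e` is again a spanning tree (the cycle `e + path`
shows `f` is no longer a bridge, and the edge count is unchanged), of weight at least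
`ε₀ · w(T₀)`. These `m` trees are pairwise distinct and different from `T₀`, since each contains
its own external edge and no other, so `Z(c) ≥ (1 + m ε₀) · w(T₀)`.
-/

namespace SimpleGraph

variable {V : Type*} {G : SimpleGraph V}

theorem Walk.IsPath.ne_of_mem_edges {u v : V} {p : G.Walk u v} (hp : p.IsPath) {f : Sym2 V}
    (hf : f ∈ p.edges) : u ≠ v :=
  fun h => List.ne_nil_of_mem hf (Walk.edges_eq_nil.mpr (hp.nil_iff_eq.mpr h))

theorem Walk.mem_of_mem_edges_fromEdgeSet {s : Set (Sym2 V)} {u v : V}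
    {p : (fromEdgeSet s).Walk u v} {f : Sym2 V} (hf : f ∈ p.edges) : f ∈ s := by
  have h := p.edges_subset_edgeSet hf
  rw [edgeSet_fromEdgeSet] at h
  exact h.1

theorem not_isBridge_sup_edge_of_mem_edges {u v : V} (huv : ¬ G.Adj u v) {p : G.Walk u v}
    (hp : p.IsPath) {f : Sym2 V} (hf : f ∈ p.edges) : ¬ (G ⊔ edge u v).IsBridge f := by
  have hvu : (G ⊔ edge u v).Adj v u :=
    Or.inr ((edge_adj ..).mpr ⟨Or.inr ⟨rfl, rfl⟩, (hp.ne_of_mem_edges hf).symm⟩)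
  have hcyc : (Walk.cons hvu (p.mapLe le_sup_left)).IsCycle := by
    rw [Walk.cons_isCycle_iff, Walk.edges_mapLe_eq_edges, Sym2.eq_swap]
    exact ⟨hp.mapLe _, fun h => huv (p.adj_of_mem_edges h)⟩
  exact fun hbr => hbr.notMem_edges_of_isCycle hcyc (by simp [hf])

theorem IsTree.sup_edge_deleteEdges [Finite V] (hG : G.IsTree) {u v : V} (huv : ¬ G.Adj u v)
    {p : G.Walk u v} (hp : p.IsPath) {f : Sym2 V} (hf : f ∈ p.edges) :
    ((G ⊔ edge u v).deleteEdges {f}).IsTree := by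
  rw [isTree_iff_connected_and_card] at hG ⊢
  obtain ⟨hconn, hcard⟩ := hG
  constructor
  · induction f using Sym2.ind
    exact (hconn.mono le_sup_left).connected_delete_edge_of_not_isBridge
      (not_isBridge_sup_edge_of_mem_edges huv hp hf)
  · have hedge : (edge u v).edgeSet = {s(u, v)} := by simpa using hp.ne_of_mem_edges hf
    simp only [Nat.card_coe_set_eq, edgeSet_deleteEdges, edgeSet_sup, hedge,
      Set.union_singleton] at hcard ⊢
    rw [Set.ncard_sdiff_singleton_of_mem (by simp [p.edges_subset_edgeSet hf]),
      Set.ncard_insert_of_notMem (show s(u, v) ∉ G.edgeSet from huv), Nat.add_sub_cancel, hcard]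

end SimpleGraph

open SimpleGraph

theorem Finset.prod_insert_erase_eq_div_mul {α β : Type*} [DecidableEq α] [CommGroupWithZero β]
    {s : Finset α} {e f : α} (he : e ∉ s) (hf : f ∈ s) {c : α → β} (hcf : c f ≠ 0) :
    ∏ x ∈ insert e (s.erase f), c x = c e / c f * ∏ x ∈ s, c x := by
  rw [prod_insert (fun h => he (mem_of_mem_erase h)), ← mul_prod_erase s c hf, ← mul_assoc,
    div_mul_cancel₀ _ hcf]

theorem Finset.add_card_nsmul_le_sum {ι κ M : Type*} [DecidableEq κ] [AddCommMonoid M]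
    [PartialOrder M] [IsOrderedAddMonoid M] {A : Finset κ} {w : κ → M} (hw : ∀ y ∈ A, 0 ≤ w y)
    {x : κ} (hx : x ∈ A) {S : Finset ι} {g : ι → κ} (hgA : ∀ i ∈ S, g i ∈ A)
    (hgx : ∀ i ∈ S, g i ≠ x) (hg : Set.InjOn g S) {a : M} (ha : ∀ i ∈ S, a ≤ w (g i)) :
    w x + S.card • a ≤ ∑ y ∈ A, w y :=
  calc w x + S.card • a
      ≤ w x + ∑ i ∈ S, w (g i) := by gcongr; exact card_nsmul_le_sum S _ a ha
    _ = ∑ y ∈ insert x (S.image g), w y := by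
        rw [sum_insert (by simpa using hgx), sum_image hg]
    _ ≤ ∑ y ∈ A, w y := by
        refine sum_le_sum_of_subset_of_nonneg ?_ fun y hy _ => hw y hy
        simpa [insert_subset_iff, image_subset_iff] using ⟨hx, hgA⟩

section SpanningTree

variable {V : Type*} [Fintype V]

theorem IsSpanningTree.not_isDiag {G : SimpleGraph V} {T : Finset (Sym2 V)}
    (hT : IsSpanningTree G T) {e : Sym2 V} (he : e ∈ T) : ¬ e.IsDiag :=
  G.not_isDiag_of_mem_edgeSet (hT.1 he)

theorem IsSpanningTree.prod_pos {G : SimpleGraph V} {c : Sym2 V → ℝ}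
    (hpos : ∀ e : Sym2 V, ¬ e.IsDiag → 0 < c e) {T : Finset (Sym2 V)}
    (hT : IsSpanningTree G T) : 0 < ∏ e ∈ T, c e :=
  Finset.prod_pos fun e he => hpos e (hT.not_isDiag he)

theorem IsSpanningTree.exchange [DecidableEq V] {T : Finset (Sym2 V)}
    (hT : IsSpanningTree ⊤ T) {u v : V} (he : s(u, v) ∉ T)
    {p : (fromEdgeSet (↑T : Set (Sym2 V))).Walk u v} (hp : p.IsPath) {f : Sym2 V}
    (hf : f ∈ p.edges) : IsSpanningTree ⊤ (insert s(u, v) (T.erase f)) := by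
  have hfe : f ≠ s(u, v) := fun h => he (h ▸ Walk.mem_of_mem_edges_fromEdgeSet hf)
  have hadj : ¬ (fromEdgeSet (↑T : Set (Sym2 V))).Adj u v := fun h => he h.1
  refine ⟨fun x hx => ?_, ?_⟩
  · rw [edgeSet_top, Set.mem_compl_iff, Sym2.mem_diagSet]
    rcases Finset.mem_insert.mp hx with rfl | hx
    · exact Sym2.mk_isDiag_iff.not.mpr (hp.ne_of_mem_edges hf)
    · exact hT.not_isDiag (Finset.mem_of_mem_erase hx)
  · convert hT.2.sup_edge_deleteEdges hadj hp hf using 1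
    ext x y
    simp only [fromEdgeSet_adj, deleteEdges_adj, sup_adj, adj_edge, Finset.coe_insert,
      Finset.coe_erase, Set.mem_insert_iff, Set.mem_sdiff, Finset.mem_coe, Set.mem_singleton_iff]
    grind

theorem IsSpanningTree.exists_le_mul_prod_of_mem_edges [DecidableEq V] {c : Sym2 V → ℝ}
    (hpos : ∀ e : Sym2 V, ¬ e.IsDiag → 0 < c e) {T : Finset (Sym2 V)}
    (hT : IsSpanningTree ⊤ T) {u v : V} (he : s(u, v) ∉ T)
    {p : (fromEdgeSet (↑T : Set (Sym2 V))).Walk u v} (hp : p.IsPath) {f : Sym2 V}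
    (hf : f ∈ p.edges) {ε : ℝ} (hε : ε ≤ c s(u, v) / c f) :
    ∃ T' : Finset (Sym2 V), IsSpanningTree ⊤ T' ∧ s(u, v) ∈ T' ∧ T' ⊆ insert s(u, v) T ∧
      ε * ∏ e ∈ T, c e ≤ ∏ e ∈ T', c e := by
  have hfT : f ∈ T := Walk.mem_of_mem_edges_fromEdgeSet hf
  refine ⟨_, hT.exchange he hp hf, Finset.mem_insert_self _ _,
    Finset.insert_subset_insert _ (Finset.erase_subset _ _), ?_⟩
  rw [Finset.prod_insert_erase_eq_div_mul he hfT (hpos f (hT.not_isDiag hfT)).ne']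
  exact mul_le_mul_of_nonneg_right hε (hT.prod_pos hpos).le

end SpanningTree

open Classical in
theorem stmt_1_general {V : Type*} [Fintype V]
    (c : Sym2 V → ℝ)
    (hpos : ∀ e : Sym2 V, ¬ e.IsDiag → 0 < c e)
    (T₀ : Finset (Sym2 V)) (hT₀ : IsSpanningTree (⊤ : SimpleGraph V) T₀)
    (ε₀ : ℝ) (hε₀ : 0 < ε₀)
    (m : ℕ)
    (S : Finset (Sym2 V)) (hScard : S.card = m)
    (hSsig : ∀ e ∈ S, ¬ e.IsDiag ∧ e ∉ T₀ ∧
      ∃ u v : V, e = s(u, v) ∧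
        ∃ q : (SimpleGraph.fromEdgeSet (↑T₀ : Set (Sym2 V))).Walk u v,
          q.IsPath ∧ ∃ f ∈ q.edges, ε₀ ≤ c e / c f) :
    (∏ e ∈ T₀, c e) /
      (∑ T ∈ Finset.univ.filter (fun T => IsSpanningTree (⊤ : SimpleGraph V) T),
        ∏ e ∈ T, c e) ≤ 1 / (1 + m * ε₀) := by
  have hheavy : ∀ e ∈ S, ∃ T, IsSpanningTree ⊤ T ∧ e ∈ T ∧ T ⊆ insert e T₀ ∧
      ε₀ * ∏ x ∈ T₀, c x ≤ ∏ x ∈ T, c x := by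
    intro e he
    obtain ⟨-, heT, u, v, rfl, q, hq, f, hf, hε⟩ := hSsig e he
    exact hT₀.exists_le_mul_prod_of_mem_edges hpos heT hq hf hε
  choose! exch hexch using hheavy
  have hexch_ne : ∀ e ∈ S, exch e ≠ T₀ :=
    fun e he h => (hSsig e he).2.1 (h ▸ (hexch e he).2.1)
  have hexch_inj : Set.InjOn exch S := fun e₁ he₁ e₂ he₂ h => by
    have := (hexch e₂ he₂).2.2.1 (h ▸ (hexch e₁ he₁).2.1)
    exact (Finset.mem_insert.mp this).resolve_right (hSsig e₁ he₁).2.1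
  have hZ := Finset.add_card_nsmul_le_sum
    (A := Finset.univ.filter (fun T => IsSpanningTree ⊤ T)) (w := fun T => ∏ x ∈ T, c x)
    (fun T hT => ((Finset.mem_filter.mp hT).2.prod_pos hpos).le)
    (Finset.mem_filter.mpr ⟨Finset.mem_univ _, hT₀⟩)
    (fun e he => Finset.mem_filter.mpr ⟨Finset.mem_univ _, (hexch e he).1⟩) hexch_ne hexch_inj
    (fun e he => (hexch e he).2.2.2)
  rw [hScard, nsmul_eq_mul] at hZ
  have hw₀ := hT₀.prod_pos hpos
  have hmε₀ : 0 ≤ (m : ℝ) * (ε₀ * ∏ x ∈ T₀, c x) := by positivity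
  rw [div_le_div_iff₀ (by linarith) (by positivity)]
  linarith

open Classical in
theorem stmt_1 {V : Type*} [Fintype V] [Nonempty V]
    (c : Sym2 V → ℝ)
    (hpos : ∀ e : Sym2 V, ¬ e.IsDiag → 0 < c e)
    (hinj : ∀ e f : Sym2 V, ¬ e.IsDiag → ¬ f.IsDiag → c e = c f → e = f)
    (T₀ : Finset (Sym2 V)) (hT₀ : IsSpanningTree (⊤ : SimpleGraph V) T₀)
    (hmax : ∀ T, IsSpanningTree (⊤ : SimpleGraph V) T → T ≠ T₀ →
      ∏ e ∈ T, c e < ∏ e ∈ T₀, c e)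
    (ε₀ : ℝ) (hε₀ : 0 < ε₀) (hε₁ : ε₀ < 1)
    (m : ℕ) (hm : 1 ≤ m)
    (S : Finset (Sym2 V)) (hScard : S.card = m)
    (hSsig : ∀ e ∈ S, ¬ e.IsDiag ∧ e ∉ T₀ ∧
      ∃ u v : V, e = s(u, v) ∧
        ∃ q : (SimpleGraph.fromEdgeSet (↑T₀ : Set (Sym2 V))).Walk u v,
          q.IsPath ∧ ∃ f ∈ q.edges, ε₀ ≤ c e / c f) :
    (∏ e ∈ T₀, c e) /
      (∑ T ∈ Finset.univ.filter (fun T => IsSpanningTree (⊤ : SimpleGraph V) T),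
        ∏ e ∈ T, c e) ≤ 1 / (1 + m * ε₀) :=
  stmt_1_general c hpos T₀ hT₀ ε₀ hε₀ m S hScard hSsig
end

section
/- Let G ⊆ G' be finite graphs on the same vertex set partially, let H be a connected component of G and H' a connected component of G' with V(H) ⊆ V(H'). Then Diam(H') ≤ Diam(H) + 2·lp(G'[V(H') \ V(H)]) + 2, where lp denotes the length of the longest (simple) path and Diam the graph diameter. -/
/-!
Distances in the graph induced on a connected component agree with distances in the ambient
graph, so everything can be measured in `G'` on `V`. A walk in `G'` from `u ∈ C' \ C` into `C`
leaves `C' \ C` for the first time along a single edge; before that it can be shortened to a path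
of `G'[C' \ C]`, so every vertex of `C'` is within distance `L + 1` of `C`. Joining `u, v ∈ C'`
through nearest points `a, b ∈ C` gives `d(u, v) ≤ (L + 1) + d_G(a, b) + (L + 1)`.
-/

namespace SimpleGraph

variable {V : Type*} {G : SimpleGraph V}

namespace Walk

@[simp]
lemma length_induce {s : Set V} {u v : V} (p : G.Walk u v) (hp : ∀ x ∈ p.support, x ∈ s) :
    (p.induce s hp).length = p.length := by
  induction p with
  | nil => rfl
  | cons _ p ih => simp [ih]

lemma IsPath.induce {s : Set V} {u v : V} {p : G.Walk u v} (hp : p.IsPath)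
    (hs : ∀ x ∈ p.support, x ∈ s) : (p.induce s hs).IsPath :=
  IsPath.of_map (f := (Embedding.induce s).toHom) (by rwa [map_induce])

lemma exists_walk_avoiding_adj_mem {s : Set V} {u v : V} (p : G.Walk u v) (hu : u ∉ s)
    (hv : v ∈ s) :
    ∃ w x, G.Adj w x ∧ x ∈ s ∧ ∃ r : G.Walk u w, ∀ y ∈ r.support, y ∉ s := by
  induction p with
  | nil => exact absurd hv hu
  | @cons u y v hadj p ih =>
    by_cases hy : y ∈ s
    · exact ⟨u, y, hadj, hy, .nil, by simpa using hu⟩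
    · obtain ⟨w, x, hwx, hx, r, hr⟩ := ih hy hv
      exact ⟨w, x, hwx, hx, .cons hadj r, by simp_all⟩

end Walk

namespace ConnectedComponent

lemma mem_supp_of_mem_support (C : G.ConnectedComponent) {u v x : V} (hu : u ∈ C.supp)
    (p : G.Walk u v) (hx : x ∈ p.support) : x ∈ C.supp := by
  classical
  rw [mem_supp_iff] at hu ⊢
  rw [← hu]
  exact (ConnectedComponent.sound (p.takeUntil x hx).reachable).symm

lemma connected_induce_supp (C : G.ConnectedComponent) : (G.induce C.supp).Connected :=
  C.connected_toSimpleGraph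

lemma dist_induce_supp (C : G.ConnectedComponent) {u v : V} (hu : u ∈ C.supp)
    (hv : v ∈ C.supp) : (G.induce C.supp).dist ⟨u, hu⟩ ⟨v, hv⟩ = G.dist u v := by
  apply le_antisymm
  · obtain ⟨p, hp⟩ := (C.reachable_of_mem_supp hu hv).exists_walk_length_eq_dist
    calc (G.induce C.supp).dist ⟨u, hu⟩ ⟨v, hv⟩
        ≤ (p.induce C.supp fun _ => C.mem_supp_of_mem_support hu p).length := dist_le _
      _ = G.dist u v := by rw [Walk.length_induce, hp]
  · obtain ⟨q, hq⟩ := C.connected_induce_supp.exists_walk_length_eq_dist ⟨u, hu⟩ ⟨v, hv⟩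
    calc G.dist u v ≤ (q.map (Embedding.induce C.supp).toHom).length := dist_le _
      _ = _ := by rw [Walk.length_map, hq]

lemma dist_le_diam_induce_supp [Finite V] (C : G.ConnectedComponent) {u v : V}
    (hu : u ∈ C.supp) (hv : v ∈ C.supp) : G.dist u v ≤ (G.induce C.supp).diam := by
  have : Nonempty C.supp := C.connected_induce_supp.nonempty
  rw [← C.dist_induce_supp hu hv]
  exact dist_le_diam (connected_iff_ediam_ne_top.mp C.connected_induce_supp)

lemma exists_mem_dist_le_of_isPath_length_le (C : G.ConnectedComponent) {s : Set V}
    (hs : (s ∩ C.supp).Nonempty) {L : ℕ}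
    (hL : ∀ x y (p : (G.induce (C.supp \ s)).Walk x y), p.IsPath → p.length ≤ L)
    {u : V} (hu : u ∈ C.supp) : ∃ c ∈ s, G.dist u c ≤ L + 1 := by
  classical
  by_cases hus : u ∈ s
  · exact ⟨u, hus, by simp⟩
  obtain ⟨v, hvs, hvC⟩ := hs
  obtain ⟨p⟩ := C.reachable_of_mem_supp hu hvC
  obtain ⟨w, c, hwc, hc, r, hr⟩ := p.exists_walk_avoiding_adj_mem hus hvs
  have hrs : ∀ y ∈ r.bypass.support, y ∈ C.supp \ s := fun y hy =>
    ⟨C.mem_supp_of_mem_support hu _ hy, hr y (r.support_bypass_subset_support hy)⟩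
  have hlen := hL _ _ _ (r.bypass_isPath.induce hrs)
  rw [Walk.length_induce] at hlen
  refine ⟨c, hc, ?_⟩
  calc G.dist u c ≤ (r.bypass.concat hwc).length := dist_le _
    _ = r.bypass.length + 1 := Walk.length_concat _ _
    _ ≤ L + 1 := by omega

end ConnectedComponent

end SimpleGraph

open SimpleGraph

theorem stmt_4_general {V : Type*} [Fintype V]
    (G G' : SimpleGraph V) (hle : G ≤ G')
    (C : G.ConnectedComponent) (C' : G'.ConnectedComponent)
    (hsub : C.supp ⊆ C'.supp)
    (L : ℕ)
    (hL : ∀ (x y : ↥(C'.supp \ C.supp))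
        (p : (G'.induce (C'.supp \ C.supp)).Walk x y), p.IsPath → p.length ≤ L) :
    (G'.induce C'.supp).diam ≤ (G.induce C.supp).diam + 2 * L + 2 := by
  have hnear : ∀ u ∈ C'.supp, ∃ c ∈ C.supp, G'.dist u c ≤ L + 1 := fun u hu =>
    C'.exists_mem_dist_le_of_isPath_length_le
      (C.nonempty_supp.mono (Set.subset_inter subset_rfl hsub)) hL hu
  have hinside : ∀ a ∈ C.supp, ∀ b ∈ C.supp, G'.dist a b ≤ (G.induce C.supp).diam :=
    fun a ha b hb => ((C.reachable_of_mem_supp ha hb).dist_anti hle).trans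
      (C.dist_le_diam_induce_supp ha hb)
  have : Nonempty C'.supp := C'.connected_induce_supp.nonempty
  obtain ⟨⟨u, hu⟩, ⟨v, hv⟩, huv⟩ := (G'.induce C'.supp).exists_dist_eq_diam
  obtain ⟨a, ha, hua⟩ := hnear u hu
  obtain ⟨b, hb, hbv⟩ := hnear v hv
  rw [← huv, C'.dist_induce_supp hu hv]
  calc G'.dist u v
      ≤ G'.dist u a + G'.dist a v :=
        (C'.reachable_of_mem_supp hu (hsub ha)).dist_triangle_left v
    _ ≤ G'.dist u a + (G'.dist a b + G'.dist b v) := by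
        gcongr
        exact (C'.reachable_of_mem_supp (hsub ha) (hsub hb)).dist_triangle_left v
    _ ≤ (L + 1) + ((G.induce C.supp).diam + (L + 1)) := by
        gcongr
        exacts [hinside a ha b hb, dist_comm.trans_le hbv]
    _ = (G.induce C.supp).diam + 2 * L + 2 := by ring

theorem stmt_4 {V : Type*} [Fintype V] [DecidableEq V]
    (G G' : SimpleGraph V) (hle : G ≤ G')
    (C : G.ConnectedComponent) (C' : G'.ConnectedComponent)
    (hsub : C.supp ⊆ C'.supp)
    (L : ℕ)
    (hL : ∀ (x y : ↥(C'.supp \ C.supp))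
        (p : (G'.induce (C'.supp \ C.supp)).Walk x y), p.IsPath → p.length ≤ L) :
    (G'.induce C'.supp).diam ≤ (G.induce C.supp).diam + 2 * L + 2 :=
  stmt_4_general G G' hle C C' hsub L hL
end

section
/- Let MST_n be the minimum spanning tree of K_n with respect to pairwise-distinct edge labels U_e ∈ [0,1], and let δ > 0. The following are equivalent: (a) for every p ∈ [0,1], every edge of G_{n, p+δ} (edges with label ≤ p+δ) whose endpoints lie in different connected components of G_{n,p} (edges with label ≤ p) belongs to MST_n; (b) for every edge e = (u,v) ∉ MST_n and every edge f on the unique MST_n-path from u to v, one has U_e − U_f ≥ δ. -/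
open SimpleGraph in
private lemma walk_closed' {V : Type*} {G : SimpleGraph V} {S : Set V}
    (hS : ∀ a ∈ S, ∀ b, G.Adj a b → b ∈ S) :
    ∀ {u v : V}, G.Walk u v → u ∈ S → v ∈ S
  | _, _, Walk.nil, hu => hu
  | _, _, Walk.cons h p, hu => walk_closed' hS p (hS _ hu _ h)

open SimpleGraph in
private lemma reach_closed' {V : Type*} {G : SimpleGraph V} {S : Set V}
    (hS : ∀ a ∈ S, ∀ b, G.Adj a b → b ∈ S) {u v : V} (hu : u ∈ S)
    (h : G.Reachable u v) : v ∈ S := by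
  obtain ⟨w⟩ := h
  exact walk_closed' hS w hu

open SimpleGraph in
private lemma walk_avoid' {V : Type*} {G H : SimpleGraph V} {x y : V}
    (hadj : ∀ a b : V, G.Adj a b → H.Adj a b ∨ s(a, b) = s(x, y)) :
    ∀ {z w : V}, G.Walk z w →
      H.Reachable z w ∨ (H.Reachable z x ∧ H.Reachable y w) ∨
        (H.Reachable z y ∧ H.Reachable x w)
  | _, _, Walk.nil => Or.inl (Reachable.refl _)
  | z, w, Walk.cons (v := c) h p => by
      rcases hadj _ _ h with h' | h'
      · rcases walk_avoid' hadj p with hc | ⟨h1, h2⟩ | ⟨h1, h2⟩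
        · exact Or.inl (h'.reachable.trans hc)
        · exact Or.inr (Or.inl ⟨h'.reachable.trans h1, h2⟩)
        · exact Or.inr (Or.inr ⟨h'.reachable.trans h1, h2⟩)
      · rw [Sym2.eq_iff] at h'
        rcases h' with ⟨rfl, rfl⟩ | ⟨rfl, rfl⟩
        · rcases walk_avoid' hadj p with hc | ⟨h1, h2⟩ | ⟨h1, h2⟩
          · exact Or.inr (Or.inl ⟨Reachable.refl _, hc⟩)
          · exact Or.inl (h1.symm.trans h2)
          · exact Or.inl h2
        · rcases walk_avoid' hadj p with hc | ⟨h1, h2⟩ | ⟨h1, h2⟩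
          · exact Or.inr (Or.inr ⟨Reachable.refl _, hc⟩)
          · exact Or.inl h2
          · exact Or.inl (h1.symm.trans h2)

open SimpleGraph in
/-- The exchange/cut property of the minimum spanning tree: if `f ∈ T` and `a`, `b` lie
on different sides of the cut obtained by deleting `f` from `T`, and `s(a,b) ∉ T`,
then `U f < U s(a,b)`. -/
private lemma exchange' {V : Type*} [Fintype V] [DecidableEq V]
    (U : Sym2 V → ℝ) (T : Finset (Sym2 V))
    (hT : IsSpanningTree (⊤ : SimpleGraph V) T)
    (hmin : ∀ T', IsSpanningTree (⊤ : SimpleGraph V) T' → T' ≠ T →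
      ∑ e ∈ T, U e < ∑ e ∈ T', U e)
    {f : Sym2 V} (hfT : f ∈ T) (u : V)
    {a b : V} (hra : (fromEdgeSet (↑(T.erase f) : Set (Sym2 V))).Reachable u a)
    (hrb : ¬ (fromEdgeSet (↑(T.erase f) : Set (Sym2 V))).Reachable u b)
    (hab : a ≠ b) (hgT : s(a, b) ∉ T) :
    U f < U s(a, b) := by
  set GT := fromEdgeSet (↑T : Set (Sym2 V)) with hGT
  set H := fromEdgeSet (↑(T.erase f) : Set (Sym2 V)) with hH
  have hfnd : ¬ f.IsDiag := by
    have := hT.1 hfT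
    rw [edgeSet_top] at this
    exact this
  have hconn : GT.Connected := hT.2.isConnected
  have hacyc : GT.IsAcyclic := hT.2.IsAcyclic
  have hHG : H ≤ GT := fromEdgeSet_mono (by exact_mod_cast Finset.erase_subset f T)
  have hadj : ∀ p q : V, GT.Adj p q → H.Adj p q ∨ s(p, q) = f := by
    intro p q hpq
    rw [hGT, fromEdgeSet_adj] at hpq
    by_cases hpf : s(p, q) = f
    · exact Or.inr hpf
    · refine Or.inl ?_
      rw [hH, fromEdgeSet_adj]
      refine ⟨?_, hpq.2⟩
      rw [Finset.coe_erase]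
      exact ⟨hpq.1, hpf⟩
  obtain ⟨x, y, hf, hux⟩ : ∃ x y, f = s(x, y) ∧ H.Reachable u x := by
    obtain ⟨x, y, hf⟩ : ∃ x y, f = s(x, y) :=
      Sym2.ind (f := fun e => ∃ x y, e = s(x, y)) (fun x y => ⟨x, y, rfl⟩) f
    have hside : ∀ z : V, H.Reachable z x ∨ H.Reachable z y := by
      intro z
      obtain ⟨w⟩ := hconn.preconnected z x
      rcases walk_avoid' (x := x) (y := y) (by simpa [← hf] using hadj) w with
        hc | ⟨h1, _⟩ | ⟨h1, _⟩
      · exact Or.inl hc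
      · exact Or.inl h1
      · exact Or.inr h1
    rcases hside u with h | h
    · exact ⟨x, y, hf, h⟩
    · exact ⟨y, x, hf.trans (Sym2.eq_swap), h⟩
  have hadj' : ∀ p q : V, GT.Adj p q → H.Adj p q ∨ s(p, q) = s(x, y) := by
    simpa [← hf] using hadj
  have hside : ∀ z : V, H.Reachable z x ∨ H.Reachable z y := by
    intro z
    obtain ⟨w⟩ := hconn.preconnected z x
    rcases walk_avoid' hadj' w with hc | ⟨h1, _⟩ | ⟨h1, _⟩
    · exact Or.inl hc
    · exact Or.inl h1
    · exact Or.inr h1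
  have hbx : ¬ H.Reachable b x := fun h => hrb (hux.trans h.symm)
  have hby : H.Reachable b y := (hside b).resolve_left hbx
  have hax : H.Reachable a x := hra.symm.trans hux
  set T' : Finset (Sym2 V) := insert s(a, b) (T.erase f) with hT'
  have hgnm : s(a, b) ∉ T.erase f := fun h => hgT (Finset.mem_of_mem_erase h)
  set G' := fromEdgeSet (↑T' : Set (Sym2 V)) with hG'
  have hHG' : H ≤ G' := fromEdgeSet_mono (by exact_mod_cast Finset.subset_insert _ _)
  have hGab : G'.Adj a b := by
    rw [hG', fromEdgeSet_adj]
    exact ⟨by exact_mod_cast Finset.mem_insert_self _ _, hab⟩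
  have rxy : G'.Reachable x y :=
    ((hax.symm.mono hHG').trans hGab.reachable).trans (hby.mono hHG')
  have hconn' : G'.Connected := by
    have key : ∀ z : V, G'.Reachable z u := by
      intro z
      obtain ⟨w⟩ := hconn.preconnected z u
      rcases walk_avoid' hadj' w with hc | ⟨h1, h2⟩ | ⟨h1, h2⟩
      · exact hc.mono hHG'
      · exact ((h1.mono hHG').trans rxy).trans (h2.mono hHG')
      · exact ((h1.mono hHG').trans rxy.symm).trans (h2.mono hHG')
    have : Nonempty V := ⟨u⟩
    exact ⟨fun z1 z2 => (key z1).trans (key z2).symm⟩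
  have hacyc' : G'.IsAcyclic := by
    intro z c hc
    by_cases hg : s(a, b) ∈ c.edges
    · have hdel := (adj_and_reachable_delete_edges_iff_exists_cycle (G := G')).2 ⟨z, c, hc, hg⟩
      have hle : (G' \ fromEdgeSet {s(a, b)}) ≤ H := by
        intro p q hpq
        rw [sdiff_adj] at hpq
        obtain ⟨h1, h2⟩ := hpq
        rw [hG', fromEdgeSet_adj] at h1
        have hne : s(p, q) ≠ s(a, b) := by
          intro hEq
          exact h2 (by rw [fromEdgeSet_adj]; exact ⟨by simp [hEq], h1.2⟩)
        rw [hH, fromEdgeSet_adj]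
        refine ⟨?_, h1.2⟩
        have := h1.1
        rw [hT'] at this
        push_cast at this ⊢
        rcases Finset.mem_insert.mp (by exact_mod_cast this) with h | h
        · exact absurd h hne
        · exact_mod_cast h
      exact hrb (hra.trans (hdel.2.mono hle))
    · have hsub : ∀ e ∈ c.edges, e ∈ GT.edgeSet := by
        intro e he
        have h1 := c.edges_subset_edgeSet he
        rw [hG', edgeSet_fromEdgeSet] at h1
        rw [hGT, edgeSet_fromEdgeSet]
        refine ⟨?_, h1.2⟩
        have := h1.1
        rw [hT'] at this
        rcases Finset.mem_insert.mp (by exact_mod_cast this) with h | h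
        · exact absurd (h ▸ he) hg
        · exact_mod_cast Finset.mem_of_mem_erase h
      exact hacyc (c.transfer GT hsub) (hc.transfer hsub)
  have hst' : IsSpanningTree (⊤ : SimpleGraph V) T' := by
    constructor
    · intro e he
      rw [edgeSet_top]
      rcases Finset.mem_insert.mp (by exact_mod_cast he) with h | h
      · subst h; simpa using hab
      · have := hT.1 (Finset.mem_of_mem_erase h)
        rwa [edgeSet_top] at this
    · exact ⟨hconn', hacyc'⟩
  have hne' : T' ≠ T := fun h => hgT (h ▸ Finset.mem_insert_self _ _)
  have hlt := hmin T' hst' hne'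
  rw [hT', Finset.sum_insert hgnm, Finset.sum_erase_eq_sub hfT] at hlt
  linarith

/- **Equivalence between an Erdős–Rényi component condition and a label-gap condition
on the MST.** Let `U` be pairwise-distinct labels in `[0,1]` on the edges of the complete
graph and `T` the minimum spanning tree. For `δ > 0` the following are equivalent:
(a) for every `p ∈ [0,1]`, every edge with label `≤ p + δ` whose endpoints lie in
different components of `G_{n,p} = {e : U e ≤ p}` belongs to `T`;
(b) for every external edge `e = (u,v) ∉ T` and every edge `f` on the unique `T`-path
from `u` to `v`, `U e - U f ≥ δ`. -/
theorem stmt_6 {V : Type*} [Fintype V] [DecidableEq V]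
    (U : Sym2 V → ℝ)
    (hrange : ∀ e : Sym2 V, ¬ e.IsDiag → U e ∈ Set.Icc (0 : ℝ) 1)
    (hinj : ∀ e f : Sym2 V, ¬ e.IsDiag → ¬ f.IsDiag → U e = U f → e = f)
    (T : Finset (Sym2 V)) (hT : IsSpanningTree (⊤ : SimpleGraph V) T)
    (hmin : ∀ T', IsSpanningTree (⊤ : SimpleGraph V) T' → T' ≠ T →
      ∑ e ∈ T, U e < ∑ e ∈ T', U e)
    (δ : ℝ) (hδ : 0 < δ) :
    (∀ p ∈ Set.Icc (0 : ℝ) 1, ∀ u v : V, u ≠ v → U s(u, v) ≤ p + δ →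
        ¬ (SimpleGraph.fromEdgeSet {e : Sym2 V | U e ≤ p}).Reachable u v →
        s(u, v) ∈ T)
      ↔ (∀ u v : V, u ≠ v → s(u, v) ∉ T →
          ∀ q : (SimpleGraph.fromEdgeSet (↑T : Set (Sym2 V))).Walk u v, q.IsPath →
            ∀ f ∈ q.edges, δ ≤ U s(u, v) - U f) := by
  classical
  set GT := SimpleGraph.fromEdgeSet (↑T : Set (Sym2 V)) with hGT
  constructor
  · -- (a) → (b)
    intro hA u v huv heT q hq f hfq
    by_contra hlt
    push_neg at hlt
    have hfGT : f ∈ GT.edgeSet := q.edges_subset_edgeSet hfq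
    rw [hGT, SimpleGraph.edgeSet_fromEdgeSet] at hfGT
    obtain ⟨hfT, hfnd⟩ := hfGT
    have hfT' : f ∈ T := hfT
    have hfnd' : ¬ f.IsDiag := hfnd
    have hend : ¬ (s(u, v)).IsDiag := by simp [huv]
    have hU1 := hrange _ hend
    have hU2 := hrange _ hfnd'
    set p := max 0 (U s(u, v) - δ) with hp
    have hp0 : (0 : ℝ) ≤ p := le_max_left _ _
    have hp1 : p ≤ 1 := max_le (by norm_num) (by linarith [hU1.2])
    have hUele : U s(u, v) ≤ p + δ := by
      have := le_max_right 0 (U s(u, v) - δ); linarith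
    have hgap : U s(u, v) - δ < U f := by linarith
    rcases lt_or_ge p (U f) with hcase | hcase
    · -- cut case: p < U f
      set H := SimpleGraph.fromEdgeSet (↑(T.erase f) : Set (Sym2 V)) with hH
      have hHG : H ≤ GT :=
        SimpleGraph.fromEdgeSet_mono (by exact_mod_cast Finset.erase_subset f T)
      have hnr : ¬ (SimpleGraph.fromEdgeSet {e : Sym2 V | U e ≤ p}).Reachable u v := by
        intro hr
        have hclosed : ∀ a ∈ {z : V | H.Reachable u z}, ∀ b,
            (SimpleGraph.fromEdgeSet {e : Sym2 V | U e ≤ p}).Adj a b →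
            b ∈ {z : V | H.Reachable u z} := by
          intro a haS b hab
          rw [SimpleGraph.fromEdgeSet_adj] at hab
          obtain ⟨hUab, hne⟩ := hab
          simp only [Set.mem_setOf_eq] at hUab haS ⊢
          have habf : s(a, b) ≠ f := by
            intro h; rw [h] at hUab; linarith
          by_cases hmem : s(a, b) ∈ T
          · have hadj : H.Adj a b := by
              rw [hH, SimpleGraph.fromEdgeSet_adj, Finset.coe_erase]
              exact ⟨⟨hmem, habf⟩, hne⟩
            exact haS.trans hadj.reachable
          · by_contra hbS
            have := exchange' U T hT hmin hfT' u haS hbS hne hmem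
            linarith
        have hvS := reach_closed' hclosed (by exact SimpleGraph.Reachable.refl u) hr
        have hvS' : H.Reachable u v := hvS
        obtain ⟨w⟩ := hvS'
        have hsub : ∀ e ∈ w.edges, e ∈ GT.edgeSet := fun e he =>
          SimpleGraph.edgeSet_mono hHG (w.edges_subset_edgeSet he)
        set w2 := w.transfer GT hsub with hw2
        have hq2 : w2.bypass.IsPath := w2.bypass_isPath
        have hEq : (⟨q, hq⟩ : GT.Path u v) = ⟨w2.bypass, hq2⟩ :=
          hT.2.IsAcyclic.path_unique _ _
        have hqq : q = w2.bypass := congrArg Subtype.val hEq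
        have hfw2 : f ∈ w2.edges := w2.edges_bypass_subset (hqq ▸ hfq)
        have hfw : f ∈ w.edges := by rwa [hw2, SimpleGraph.Walk.edges_transfer] at hfw2
        have hfH := w.edges_subset_edgeSet hfw
        rw [hH, SimpleGraph.edgeSet_fromEdgeSet, Finset.coe_erase] at hfH
        exact hfH.1.2 rfl
      exact heT (hA p ⟨hp0, hp1⟩ u v huv hUele hnr)
    · -- degenerate case: U f = 0 and p = 0
      have hsm : U s(u, v) - δ < 0 := by
        by_contra hge
        push_neg at hge
        have : p = U s(u, v) - δ := max_eq_right hge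
        linarith
      have hpz : p = 0 := max_eq_left hsm.le
      have hUf0 : U f = 0 := le_antisymm (hpz ▸ hcase) hU2.1
      have hnr : ¬ (SimpleGraph.fromEdgeSet {e : Sym2 V | U e ≤ p}).Reachable u v := by
        intro hr
        have hclosed : ∀ a ∈ {z : V | z = u ∨ s(u, z) = f}, ∀ b,
            (SimpleGraph.fromEdgeSet {e : Sym2 V | U e ≤ p}).Adj a b →
            b ∈ {z : V | z = u ∨ s(u, z) = f} := by
          intro a haS b hab
          rw [SimpleGraph.fromEdgeSet_adj] at hab
          obtain ⟨hUab, hne⟩ := hab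
          simp only [Set.mem_setOf_eq] at hUab haS ⊢
          have hnd : ¬ (s(a, b)).IsDiag := by simp [hne]
          have h0 : U s(a, b) = 0 :=
            le_antisymm (by rw [hpz] at hUab; exact hUab) (hrange _ hnd).1
          have habf : s(a, b) = f := hinj _ _ hnd hfnd' (by rw [h0, hUf0])
          rcases haS with rfl | hf'
          · exact Or.inr habf
          · left
            have h1 : s(a, b) = s(a, u) := by rw [habf, ← hf', Sym2.eq_swap]
            exact Sym2.congr_right.mp h1
        have hvS := reach_closed' hclosed (Or.inl rfl) hr
        rcases hvS with h | h
        · exact huv h.symm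
        · exact heT (h ▸ hfT')
      exact heT (hA p ⟨hp0, hp1⟩ u v huv hUele hnr)
  · -- (b) → (a)
    intro hB p hp u v huv hUe hnr
    by_contra heT
    obtain ⟨w⟩ := hT.2.isConnected.preconnected u v
    have hq : w.bypass.IsPath := w.bypass_isPath
    have hedges : ∀ e ∈ w.bypass.edges,
        e ∈ (SimpleGraph.fromEdgeSet {e : Sym2 V | U e ≤ p}).edgeSet := by
      intro e he
      have h1 := hB u v huv heT w.bypass hq e he
      have h2 : e ∈ GT.edgeSet := w.bypass.edges_subset_edgeSet he
      rw [hGT, SimpleGraph.edgeSet_fromEdgeSet] at h2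
      rw [SimpleGraph.edgeSet_fromEdgeSet]
      exact ⟨by simp only [Set.mem_setOf_eq]; linarith, h2.2⟩
    exact hnr ⟨w.bypass.transfer _ hedges⟩
end

section
/- Consider the electric network on n+2 vertices consisting of a set L of internal edges together with exactly two boundary edges g = (a_1, b_1) and h = (a_2, b_2), where a_1, a_2 are internal vertices and b_1, b_2 are two distinct boundary vertices with no other incident edges. Let v be the voltage with v(b_1)=0, v(b_2)=1 and ṽ the voltage in the network with the conductances of g and h swapped, with ṽ(b_1)=1, ṽ(b_2)=0. If r(h) ≥ r(g) (resistances r = 1/c), then for any internal vertex w: v(w) + ṽ(w) ≥ 2 r(g)/(r(h)+r(g)). In particular, if r(g) ≥ ε₀ r(h) with ε₀ ∈ (0,1), then max(v(w), ṽ(w)) ≥ ε₀/(1+ε₀). -/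
/-!
Green's identity turns both Dirichlet problems into relations between boundary currents.
Conservation gives a current `i = c(g) v(a₁) = c(h) (1 - v(a₂))`, and comparing the energy `2 i`
with the share `2 i² (r(g) + r(h))` of the two boundary edges gives `i (r(g) + r(h)) ≤ 1`.
Swapping the conductances changes the Dirichlet form only on `g` and `h`; by conservation that
change vanishes, which is reciprocity: `ṽ(a₁) = v(a₂)` and `ṽ(a₂) = v(a₁)`. So `v + ṽ` equals
`1 - i (r(h) - r(g)) ≥ 2 r(g) / (r(h) + r(g))` at `a₁` and `a₂`, equals `1` at `b₁` and `b₂`, and is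
harmonic at every other vertex, so the minimum principle gives the bound everywhere.
-/

open Finset

namespace ElectricNetwork

variable {V : Type*}

theorem symm_of_eq_off_two_edges {c c' : V → V → ℝ} (hc : ∀ x y, c x y = c y x) {a₁ b₁ a₂ b₂ : V}
    (hc' : ∀ x y, s(x, y) ≠ s(a₁, b₁) → s(x, y) ≠ s(a₂, b₂) → c' x y = c x y)
    (h₁ : c' a₁ b₁ = c' b₁ a₁) (h₂ : c' a₂ b₂ = c' b₂ a₂) (x y : V) : c' x y = c' y x := by
  by_cases hx₁ : s(x, y) = s(a₁, b₁)
  · rcases Sym2.eq_iff.1 hx₁ with ⟨rfl, rfl⟩ | ⟨rfl, rfl⟩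
    exacts [h₁, h₁.symm]
  by_cases hx₂ : s(x, y) = s(a₂, b₂)
  · rcases Sym2.eq_iff.1 hx₂ with ⟨rfl, rfl⟩ | ⟨rfl, rfl⟩
    exacts [h₂, h₂.symm]
  rw [hc' x y hx₁ hx₂, hc' y x (by rwa [Sym2.eq_swap]) (by rwa [Sym2.eq_swap]), hc]

theorem pendant_of_eq_off {c c' : V → V → ℝ} {a b : V} {e : Sym2 V}
    (hc' : ∀ x y, s(x, y) ≠ s(a, b) → s(x, y) ≠ e → c' x y = c x y) (hbe : b ∉ e)
    (hb : ∀ x, x ≠ a → c x b = 0) {x : V} (hx : x ≠ a) : c' x b = 0 := by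
  rw [hc' x b (fun h => hx (Sym2.congr_left.1 h)) (fun h => hbe (h ▸ Sym2.mem_mk_right x b)),
    hb x hx]

variable [Fintype V]

def laplacian (c : V → V → ℝ) (f : V → ℝ) (x : V) : ℝ := ∑ y, c x y * (f y - f x)

def dirichletForm (c : V → V → ℝ) (f g : V → ℝ) : ℝ :=
  ∑ x, ∑ y, c x y * (f y - f x) * (g y - g x)

variable {c c' : V → V → ℝ}

theorem laplacian_add (c : V → V → ℝ) (f g : V → ℝ) (x : V) :
    laplacian c (f + g) x = laplacian c f x + laplacian c g x := by
  simp only [laplacian, ← sum_add_distrib, Pi.add_apply]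
  exact sum_congr rfl fun y _ => by ring

theorem laplacian_eq_of_eq_off_two_edges {a₁ b₁ a₂ b₂ : V}
    (hc' : ∀ x y, s(x, y) ≠ s(a₁, b₁) → s(x, y) ≠ s(a₂, b₂) → c' x y = c x y) {x : V}
    (hx₁ : x ∉ s(a₁, b₁)) (hx₂ : x ∉ s(a₂, b₂)) (f : V → ℝ) :
    laplacian c' f x = laplacian c f x :=
  sum_congr rfl fun y _ => by
    rw [hc' x y (fun h => hx₁ (h ▸ Sym2.mem_mk_left x y)) (fun h => hx₂ (h ▸ Sym2.mem_mk_left x y))]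

theorem dirichletForm_comm (c : V → V → ℝ) (f g : V → ℝ) :
    dirichletForm c f g = dirichletForm c g f := by
  simp only [dirichletForm, mul_right_comm]

theorem dirichletForm_sub (c c' : V → V → ℝ) (f g : V → ℝ) :
    dirichletForm c f g - dirichletForm c' f g = dirichletForm (c - c') f g := by
  simp only [dirichletForm, ← sum_sub_distrib, Pi.sub_apply, sub_mul]

theorem dirichletForm_eq_neg_two_mul_sum (hc : ∀ x y, c x y = c y x) (f g : V → ℝ) :
    dirichletForm c f g = -2 * ∑ x, g x * laplacian c f x := by
  have hswap : ∑ x, ∑ y, c x y * (f y - f x) * g y = -∑ x, ∑ y, c x y * (f y - f x) * g x := by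
    rw [sum_comm, ← sum_neg_distrib]
    refine sum_congr rfl fun y _ => ?_
    rw [← sum_neg_distrib]
    exact sum_congr rfl fun x _ => by rw [hc x y]; ring
  have hsplit : dirichletForm c f g = ∑ x, ∑ y, c x y * (f y - f x) * g y
      - ∑ x, ∑ y, c x y * (f y - f x) * g x := by
    simp only [dirichletForm, mul_sub, sum_sub_distrib]
  have hlap : ∑ x, g x * laplacian c f x = ∑ x, ∑ y, c x y * (f y - f x) * g x := by
    simp only [laplacian, mul_comm (g _), sum_mul]
  rw [hsplit, hswap, hlap]
  ring

theorem laplacian_of_pendant (hc : ∀ x y, c x y = c y x) {a b : V}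
    (hb : ∀ x, x ≠ a → c x b = 0) (f : V → ℝ) :
    laplacian c f b = c a b * (f a - f b) := by
  rw [laplacian, Fintype.sum_eq_single a fun y hy => by rw [hc, hb y hy, zero_mul], hc]

theorem eq_of_laplacian_eq_zero_of_isMin (hc : ∀ x y, 0 ≤ c x y) {f : V → ℝ} {x : V}
    (hx : ∀ y, f x ≤ f y) (hfx : laplacian c f x = 0) {y : V} (hxy : 0 < c x y) :
    f y = f x := by
  have hterms := (Fintype.sum_eq_zero_iff_of_nonneg fun z =>
    mul_nonneg (hc x z) (sub_nonneg.2 (hx z))).1 hfx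
  simpa [hxy.ne', sub_eq_zero] using congrFun hterms y

theorem exists_le_of_laplacian_eq_zero (hc : ∀ x y, c x y = c y x) (hc₀ : ∀ x y, 0 ≤ c x y)
    (hconn : (SimpleGraph.fromRel fun x y => 0 < c x y).Connected) {B : Finset V}
    (hB : B.Nonempty) {f : V → ℝ} (hf : ∀ x ∉ B, laplacian c f x = 0) (w : V) :
    ∃ b ∈ B, f b ≤ f w := by
  obtain ⟨x₀, -, hx₀⟩ := exists_min_image univ f ⟨w, mem_univ w⟩
  suffices h : ∃ b ∈ B, f b = f x₀ from
    h.imp fun b ⟨hb, hbx⟩ => ⟨hb, hbx ▸ hx₀ w (mem_univ w)⟩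
  by_contra! hne
  have hmin : ∀ y, f y = f x₀ := by
    intro y
    induction (SimpleGraph.reachable_iff_reflTransGen x₀ y).1 (hconn x₀ y) with
    | refl => rfl
    | @tail x z _ hxz ih =>
      have hx : ∀ y, f x ≤ f y := fun y => ih ▸ hx₀ y (mem_univ y)
      have hxB : x ∉ B := fun hxB => hne x hxB ih
      obtain ⟨-, hxz | hzx⟩ := hxz
      · rw [eq_of_laplacian_eq_zero_of_isMin hc₀ hx (hf x hxB) hxz, ih]
      · rw [eq_of_laplacian_eq_zero_of_isMin hc₀ hx (hf x hxB) (hc z x ▸ hzx), ih]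
  obtain ⟨b, hb⟩ := hB
  exact hne b hb (hmin b)

theorem sum_sum_eq_of_support (k : V → V → ℝ) {a₁ b₁ a₂ b₂ : V} (h₁ : a₁ ≠ b₁) (h₂ : a₂ ≠ b₂)
    (h : s(a₁, b₁) ≠ s(a₂, b₂))
    (hk : ∀ x y, s(x, y) ≠ s(a₁, b₁) → s(x, y) ≠ s(a₂, b₂) → k x y = 0) :
    ∑ x, ∑ y, k x y = k a₁ b₁ + k b₁ a₁ + k a₂ b₂ + k b₂ a₂ := by
  classical
  rw [Ne, Sym2.eq_iff] at h
  rw [← Fintype.sum_prod_type',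
    ← sum_subset (subset_univ {(a₁, b₁), (b₁, a₁), (a₂, b₂), (b₂, a₂)})]
  · rw [sum_insert, sum_insert, sum_insert, sum_singleton, add_assoc, add_assoc] <;>
      simp only [mem_insert, mem_singleton, Prod.ext_iff, not_or] <;> grind
  · rintro ⟨x, y⟩ - hxy
    simp only [mem_insert, mem_singleton, Prod.ext_iff, not_or] at hxy
    exact hk x y (by rw [Ne, Sym2.eq_iff]; tauto) (by rw [Ne, Sym2.eq_iff]; tauto)

theorem le_sum_sum_of_nonneg {k : V → V → ℝ} (hk : ∀ x y, 0 ≤ k x y) {a₁ b₁ a₂ b₂ : V}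
    (h₁ : a₁ ≠ b₁) (h₂ : a₂ ≠ b₂) (h : s(a₁, b₁) ≠ s(a₂, b₂)) :
    k a₁ b₁ + k b₁ a₁ + k a₂ b₂ + k b₂ a₂ ≤ ∑ x, ∑ y, k x y := by
  classical
  let k' x y := if s(x, y) = s(a₁, b₁) ∨ s(x, y) = s(a₂, b₂) then k x y else 0
  calc k a₁ b₁ + k b₁ a₁ + k a₂ b₂ + k b₂ a₂ = ∑ x, ∑ y, k' x y := by
        rw [sum_sum_eq_of_support k' h₁ h₂ h fun x y h₁ h₂ => if_neg (by tauto)]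
        simp [k']
    _ ≤ ∑ x, ∑ y, k x y :=
        sum_le_sum fun x _ => sum_le_sum fun y _ => by dsimp only [k']; split_ifs <;> simp [hk]

theorem dirichletForm_of_support (hc : ∀ x y, c x y = c y x) {a₁ b₁ a₂ b₂ : V} (h₁ : a₁ ≠ b₁)
    (h₂ : a₂ ≠ b₂) (h : s(a₁, b₁) ≠ s(a₂, b₂))
    (hc₀ : ∀ x y, s(x, y) ≠ s(a₁, b₁) → s(x, y) ≠ s(a₂, b₂) → c x y = 0) (f g : V → ℝ) :
    dirichletForm c f g = 2 * c a₁ b₁ * (f b₁ - f a₁) * (g b₁ - g a₁)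
      + 2 * c a₂ b₂ * (f b₂ - f a₂) * (g b₂ - g a₂) := by
  rw [dirichletForm, sum_sum_eq_of_support _ h₁ h₂ h fun x y hx hy => by rw [hc₀ x y hx hy]; ring,
    hc b₁, hc b₂]
  ring

theorem le_dirichletForm_self (hc : ∀ x y, c x y = c y x) (hc₀ : ∀ x y, 0 ≤ c x y)
    {a₁ b₁ a₂ b₂ : V} (h₁ : a₁ ≠ b₁) (h₂ : a₂ ≠ b₂) (h : s(a₁, b₁) ≠ s(a₂, b₂)) (f : V → ℝ) :
    2 * c a₁ b₁ * (f b₁ - f a₁) ^ 2 + 2 * c a₂ b₂ * (f b₂ - f a₂) ^ 2 ≤ dirichletForm c f f := by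
  refine le_of_eq_of_le ?_ (le_sum_sum_of_nonneg (fun x y => ?_) h₁ h₂ h)
  · rw [hc b₁, hc b₂]
    ring
  · rw [mul_assoc]
    exact mul_nonneg (hc₀ x y) (mul_self_nonneg _)

section TwoPendants

variable {a₁ a₂ b₁ b₂ : V}

theorem dirichletForm_of_pendants (hc : ∀ x y, c x y = c y x) (hb : b₁ ≠ b₂)
    (hdeg₁ : ∀ x, x ≠ a₁ → c x b₁ = 0) (hdeg₂ : ∀ x, x ≠ a₂ → c x b₂ = 0) {f : V → ℝ}
    (hf : ∀ x, x ≠ b₁ → x ≠ b₂ → laplacian c f x = 0) (g : V → ℝ) :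
    dirichletForm c f g
      = -2 * (g b₁ * (c a₁ b₁ * (f a₁ - f b₁)) + g b₂ * (c a₂ b₂ * (f a₂ - f b₂))) := by
  rw [dirichletForm_eq_neg_two_mul_sum hc,
    Fintype.sum_eq_add b₁ b₂ hb fun x hx => by rw [hf x hx.1 hx.2, mul_zero],
    laplacian_of_pendant hc hdeg₁, laplacian_of_pendant hc hdeg₂]

theorem pendant_currents_add_eq_zero (hc : ∀ x y, c x y = c y x) (hb : b₁ ≠ b₂)
    (hdeg₁ : ∀ x, x ≠ a₁ → c x b₁ = 0) (hdeg₂ : ∀ x, x ≠ a₂ → c x b₂ = 0) {f : V → ℝ}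
    (hf : ∀ x, x ≠ b₁ → x ≠ b₂ → laplacian c f x = 0) :
    c a₁ b₁ * (f a₁ - f b₁) + c a₂ b₂ * (f a₂ - f b₂) = 0 := by
  have h := dirichletForm_of_pendants hc hb hdeg₁ hdeg₂ hf fun _ => 1
  simp only [dirichletForm, sub_self, mul_zero, sum_const_zero, one_mul] at h
  linarith

theorem exists_current_mul_resistance_le_one (hc : ∀ x y, c x y = c y x)
    (hc₀ : ∀ x y, 0 ≤ c x y) (hb : b₁ ≠ b₂) (h₁ : a₁ ≠ b₁) (h₂ : a₂ ≠ b₂)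
    (h : s(a₁, b₁) ≠ s(a₂, b₂)) (hdeg₁ : ∀ x, x ≠ a₁ → c x b₁ = 0)
    (hdeg₂ : ∀ x, x ≠ a₂ → c x b₂ = 0) (hg : 0 < c a₁ b₁) (hh : 0 < c a₂ b₂) {f : V → ℝ}
    (hf : ∀ x, x ≠ b₁ → x ≠ b₂ → laplacian c f x = 0) (hf₁ : f b₁ = 0) (hf₂ : f b₂ = 1) :
    ∃ i, i * ((c a₁ b₁)⁻¹ + (c a₂ b₂)⁻¹) ≤ 1 ∧
      f a₁ = i * (c a₁ b₁)⁻¹ ∧ f a₂ = 1 - i * (c a₂ b₂)⁻¹ := by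
  have hcons := pendant_currents_add_eq_zero hc hb hdeg₁ hdeg₂ hf
  have henergy := (le_dirichletForm_self hc hc₀ h₁ h₂ h f).trans_eq
    (dirichletForm_of_pendants hc hb hdeg₁ hdeg₂ hf f)
  rw [hf₁, hf₂] at hcons henergy
  obtain ⟨i, hi⟩ : ∃ i, i = c a₁ b₁ * f a₁ := ⟨_, rfl⟩
  have hi' : i = c a₂ b₂ * (1 - f a₂) := by linarith
  refine ⟨i, ?_, by rw [hi]; field_simp, by rw [hi']; field_simp; ring⟩
  -- the energy equals `2 i` (unit voltage drop) and is at least `2 i² (r(g) + r(h))`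
  have hg' : i * (i * (c a₁ b₁)⁻¹) = c a₁ b₁ * f a₁ ^ 2 := by rw [hi]; field_simp
  have hh' : i * (i * (c a₂ b₂)⁻¹) = c a₂ b₂ * (1 - f a₂) ^ 2 := by rw [hi']; field_simp
  have hquad : i * (i * ((c a₁ b₁)⁻¹ + (c a₂ b₂)⁻¹)) ≤ i * 1 := by
    rw [mul_add, mul_add, hg', hh']
    linarith
  have hi₀ : 0 ≤ i := by
    nlinarith [mul_nonneg hg.le (sq_nonneg (f a₁)), mul_nonneg hh.le (sq_nonneg (1 - f a₂))]
  rcases hi₀.eq_or_lt with hi0 | hipos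
  · rw [← hi0, zero_mul]
    exact zero_le_one
  · exact le_of_mul_le_mul_left hquad hipos

theorem swapped_voltage_eq (hc : ∀ x y, c x y = c y x) (hc' : ∀ x y, c' x y = c' y x)
    (hb : b₁ ≠ b₂) (h₁ : a₁ ≠ b₁) (h₂ : a₂ ≠ b₂) (h : s(a₁, b₁) ≠ s(a₂, b₂))
    (hdeg₁ : ∀ x, x ≠ a₁ → c x b₁ = 0) (hdeg₂ : ∀ x, x ≠ a₂ → c x b₂ = 0)
    (hdeg₁' : ∀ x, x ≠ a₁ → c' x b₁ = 0) (hdeg₂' : ∀ x, x ≠ a₂ → c' x b₂ = 0)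
    (hg : 0 < c a₁ b₁) (hh : 0 < c a₂ b₂)
    (hc'g : c' a₁ b₁ = c a₂ b₂) (hc'h : c' a₂ b₂ = c a₁ b₁)
    (hc'rest : ∀ x y, s(x, y) ≠ s(a₁, b₁) → s(x, y) ≠ s(a₂, b₂) → c' x y = c x y)
    {v vt : V → ℝ} (hv : ∀ x, x ≠ b₁ → x ≠ b₂ → laplacian c v x = 0)
    (hvt : ∀ x, x ≠ b₁ → x ≠ b₂ → laplacian c' vt x = 0)
    (hvb₁ : v b₁ = 0) (hvb₂ : v b₂ = 1) (hvtb₁ : vt b₁ = 1) (hvtb₂ : vt b₂ = 0) :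
    vt a₁ = v a₂ ∧ vt a₂ = v a₁ := by
  have hcons := pendant_currents_add_eq_zero hc hb hdeg₁ hdeg₂ hv
  have hcons' := pendant_currents_add_eq_zero hc' hb hdeg₁' hdeg₂' hvt
  have hE := dirichletForm_of_pendants hc hb hdeg₁ hdeg₂ hv vt
  have hE' := dirichletForm_of_pendants hc' hb hdeg₁' hdeg₂' hvt v
  have hdiff := dirichletForm_sub c c' vt v
  rw [dirichletForm_comm c vt, hE, hE', dirichletForm_of_support
    (fun x y => by simp [hc x y, hc' x y]) h₁ h₂ h (fun x y hx hy => by simp [hc'rest x y hx hy])]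
    at hdiff
  simp only [Pi.sub_apply, hc'g, hc'h, hvb₁, hvb₂, hvtb₁, hvtb₂] at hcons hcons' hdiff
  -- the swap changes the energy only on `g` and `h`, and that change vanishes by conservation
  have hrec : c a₂ b₂ * (c a₁ b₁ * (vt a₂ - v a₁)) = 0 := by
    linear_combination
      c a₂ b₂ / 2 * hdiff + (c a₁ b₁ - c a₂ b₂) * (v a₁ * hcons' - vt a₂ * hcons)
  have ht : vt a₂ = v a₁ := by
    simpa [hg.ne', hh.ne', sub_eq_zero] using hrec
  refine ⟨?_, ht⟩
  have : c a₂ b₂ * (vt a₁ - v a₂) = 0 := by linear_combination hcons' - hcons - c a₁ b₁ * ht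
  simpa [hh.ne', sub_eq_zero] using this

end TwoPendants

end ElectricNetwork

theorem two_mul_div_le_one_add_sub {r₁ r₂ i : ℝ} (hr₁ : 0 < r₁) (hr : r₁ ≤ r₂)
    (hi : i * (r₁ + r₂) ≤ 1) : 2 * r₁ / (r₂ + r₁) ≤ 1 + i * r₁ - i * r₂ := by
  rw [div_le_iff₀ (by linarith)]
  nlinarith [mul_le_mul_of_nonneg_right hi (sub_nonneg.2 hr)]

theorem two_mul_div_one_add_le {r₁ r₂ ε : ℝ} (hr₂ : 0 < r₂) (hε : 0 < ε) (hεr : ε * r₂ ≤ r₁) :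
    2 * ε / (1 + ε) ≤ 2 * r₁ / (r₂ + r₁) := by
  rw [div_le_div_iff₀ (by linarith) (by nlinarith)]
  nlinarith

open ElectricNetwork

theorem stmt_10_general {V : Type*} [Fintype V] [DecidableEq V]
    (c c' : V → V → ℝ)
    (hsymm : ∀ x y, c x y = c y x) (hnonneg : ∀ x y, 0 ≤ c x y)
    (a₁ a₂ b₁ b₂ w : V)
    (hb : b₁ ≠ b₂) (ha₁b₁ : a₁ ≠ b₁) (ha₁b₂ : a₁ ≠ b₂) (ha₂b₁ : a₂ ≠ b₁) (ha₂b₂ : a₂ ≠ b₂)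
    (hdeg₁ : ∀ x, x ≠ a₁ → c x b₁ = 0)
    (hdeg₂ : ∀ x, x ≠ a₂ → c x b₂ = 0)
    (hg : 0 < c a₁ b₁) (hh : 0 < c a₂ b₂)
    (hconn : (SimpleGraph.fromRel fun x y => 0 < c x y).Connected)
    (hc'g : c' a₁ b₁ = c a₂ b₂) (hc'g' : c' b₁ a₁ = c a₂ b₂)
    (hc'h : c' a₂ b₂ = c a₁ b₁) (hc'h' : c' b₂ a₂ = c a₁ b₁)
    (hc'rest : ∀ x y : V, s(x, y) ≠ s(a₁, b₁) → s(x, y) ≠ s(a₂, b₂) → c' x y = c x y)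
    (v vt : V → ℝ)
    (hvb₁ : v b₁ = 0) (hvb₂ : v b₂ = 1)
    (hvtb₁ : vt b₁ = 1) (hvtb₂ : vt b₂ = 0)
    (hharm : ∀ x, x ≠ b₁ → x ≠ b₂ → ∑ y, c x y * (v y - v x) = 0)
    (hharm' : ∀ x, x ≠ b₁ → x ≠ b₂ → ∑ y, c' x y * (vt y - vt x) = 0)
    (hr : (c a₁ b₁)⁻¹ ≤ (c a₂ b₂)⁻¹) :
    2 * (c a₁ b₁)⁻¹ / ((c a₂ b₂)⁻¹ + (c a₁ b₁)⁻¹) ≤ v w + vt w ∧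
      ∀ ε₀ : ℝ, 0 < ε₀ → ε₀ < 1 → ε₀ * (c a₂ b₂)⁻¹ ≤ (c a₁ b₁)⁻¹ →
        ε₀ / (1 + ε₀) ≤ max (v w) (vt w) := by
  have hgh : s(a₁, b₁) ≠ s(a₂, b₂) := by rw [Ne, Sym2.eq_iff]; tauto
  have hc' := symm_of_eq_off_two_edges hsymm hc'rest (hc'g.trans hc'g'.symm)
    (hc'h.trans hc'h'.symm)
  have hdeg₁' : ∀ x, x ≠ a₁ → c' x b₁ = 0 := fun _ =>
    pendant_of_eq_off hc'rest (by simp [hb, ha₂b₁.symm]) hdeg₁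
  have hdeg₂' : ∀ x, x ≠ a₂ → c' x b₂ = 0 := fun _ =>
    pendant_of_eq_off (fun x y h₂ h₁ => hc'rest x y h₁ h₂) (by simp [hb.symm, ha₁b₂.symm]) hdeg₂
  obtain ⟨i, hi, hva₁, hva₂⟩ := exists_current_mul_resistance_le_one hsymm hnonneg hb ha₁b₁ ha₂b₂
    hgh hdeg₁ hdeg₂ hg hh hharm hvb₁ hvb₂
  obtain ⟨hvta₁, hvta₂⟩ := swapped_voltage_eq hsymm hc' hb ha₁b₁ ha₂b₂ hgh hdeg₁ hdeg₂ hdeg₁'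
    hdeg₂' hg hh hc'g hc'h hc'rest hharm hharm' hvb₁ hvb₂ hvtb₁ hvtb₂
  set L := 2 * (c a₁ b₁)⁻¹ / ((c a₂ b₂)⁻¹ + (c a₁ b₁)⁻¹)
  have hLa : L ≤ v a₁ + v a₂ := by
    linarith [two_mul_div_le_one_add_sub (inv_pos.2 hg) hr hi]
  have hL1 : L ≤ 1 := by simpa using two_mul_div_le_one_add_sub (i := 0) (inv_pos.2 hg) hr (by simp)
  have hsum : ∀ x ∉ ({a₁, b₁, a₂, b₂} : Finset V), laplacian c (v + vt) x = 0 := by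
    intro x hx
    simp only [mem_insert, mem_singleton, not_or] at hx
    have hv : laplacian c v x = 0 := hharm x hx.2.1 hx.2.2.2
    have hvt : laplacian c' vt x = 0 := hharm' x hx.2.1 hx.2.2.2
    rw [laplacian_add, ← laplacian_eq_of_eq_off_two_edges hc'rest (by simp [hx.1, hx.2.1])
      (by simp [hx.2.2.1, hx.2.2.2]) vt, hv, hvt, add_zero]
  obtain ⟨b, hbB, hbw⟩ := exists_le_of_laplacian_eq_zero hsymm hnonneg hconn (insert_nonempty _ _)
    hsum w
  have hw : L ≤ v w + vt w := by
    simp only [mem_insert, mem_singleton] at hbB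
    rcases hbB with rfl | rfl | rfl | rfl <;> simp only [Pi.add_apply] at hbw <;> linarith
  refine ⟨hw, fun ε₀ hε₀ _ hε => ?_⟩
  have hεL := two_mul_div_one_add_le (inv_pos.2 hh) hε₀ hε
  rw [mul_div_assoc] at hεL
  linarith [le_max_left (v w) (vt w), le_max_right (v w) (vt w)]

theorem stmt_10 {V : Type*} [Fintype V] [DecidableEq V]
    (c c' : V → V → ℝ)
    (hsymm : ∀ x y, c x y = c y x) (hnonneg : ∀ x y, 0 ≤ c x y) (hdiag : ∀ x, c x x = 0)
    (a₁ a₂ b₁ b₂ w : V)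
    (hb : b₁ ≠ b₂) (ha₁b₁ : a₁ ≠ b₁) (ha₁b₂ : a₁ ≠ b₂) (ha₂b₁ : a₂ ≠ b₁) (ha₂b₂ : a₂ ≠ b₂)
    (hwb₁ : w ≠ b₁) (hwb₂ : w ≠ b₂)
    (hdeg₁ : ∀ x, x ≠ a₁ → c x b₁ = 0)
    (hdeg₂ : ∀ x, x ≠ a₂ → c x b₂ = 0)
    (hg : 0 < c a₁ b₁) (hh : 0 < c a₂ b₂)
    (hconn : (SimpleGraph.fromRel fun x y => 0 < c x y).Connected)
    (hc'g : c' a₁ b₁ = c a₂ b₂) (hc'g' : c' b₁ a₁ = c a₂ b₂)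
    (hc'h : c' a₂ b₂ = c a₁ b₁) (hc'h' : c' b₂ a₂ = c a₁ b₁)
    (hc'rest : ∀ x y : V, s(x, y) ≠ s(a₁, b₁) → s(x, y) ≠ s(a₂, b₂) → c' x y = c x y)
    (v vt : V → ℝ)
    (hvb₁ : v b₁ = 0) (hvb₂ : v b₂ = 1)
    (hvtb₁ : vt b₁ = 1) (hvtb₂ : vt b₂ = 0)
    (hharm : ∀ x, x ≠ b₁ → x ≠ b₂ → ∑ y, c x y * (v y - v x) = 0)
    (hharm' : ∀ x, x ≠ b₁ → x ≠ b₂ → ∑ y, c' x y * (vt y - vt x) = 0)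
    (hr : (c a₁ b₁)⁻¹ ≤ (c a₂ b₂)⁻¹) :
    2 * (c a₁ b₁)⁻¹ / ((c a₂ b₂)⁻¹ + (c a₁ b₁)⁻¹) ≤ v w + vt w ∧
      ∀ ε₀ : ℝ, 0 < ε₀ → ε₀ < 1 → ε₀ * (c a₂ b₂)⁻¹ ≤ (c a₁ b₁)⁻¹ →
        ε₀ / (1 + ε₀) ≤ max (v w) (vt w) :=
  stmt_10_general c c' hsymm hnonneg a₁ a₂ b₁ b₂ w hb ha₁b₁ ha₁b₂ ha₂b₁ ha₂b₂ hdeg₁ hdeg₂ hg hh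
    hconn hc'g hc'g' hc'h hc'h' hc'rest v vt hvb₁ hvb₂ hvtb₁ hvtb₂ hharm hharm' hr
end

section
/- Condition on the edge set and labels {(f, U_f) : f ∈ MST_n} of the minimum spanning tree of K_n with i.i.d. Uniform[0,1] labels. Then the labels {U_e : e ∉ MST_n} of the external edges are conditionally independent, and U_e for e = (u,v) is conditionally Uniform on [m_e, 1], where m_e = max{U_f : f on the MST_n-path from u to v}. -/
/-!
By the cycle property, `T` is the unique minimum spanning tree exactly when every external edge
`e` has a label above `m_e`, the largest tree label on its fundamental path; and `m_e` is a
function of the tree labels only. Splitting the product measure into tree and external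
coordinates (Fubini), for fixed tree labels this event is the box `∏_e (m_e, 1]` in the external
coordinates, on which the product of uniform laws is again a product, of uniform laws on
`[m_e, 1]`.
-/

open MeasureTheory

open Set
open scoped ENNReal

theorem Finset.sum_insert_erase {α β : Type*} [DecidableEq α] [AddCommGroup β] {s : Finset α}
    {a b : α} (ha : a ∉ s) (hb : b ∈ s) (f : α → β) :
    ∑ x ∈ insert a (s.erase b), f x = ∑ x ∈ s, f x - f b + f a := by
  rw [sum_insert (fun h => ha (mem_of_mem_erase h)), sum_erase_eq_sub hb, add_comm]

namespace SimpleGraph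

variable {V : Type*} {G : SimpleGraph V}

theorem Walk.reachable_deleteEdges_or {a b z t : V} (w : G.Walk z t) :
    (G.deleteEdges {s(a, b)}).Reachable z t ∨
      (G.deleteEdges {s(a, b)}).Reachable z a ∧ (G.deleteEdges {s(a, b)}).Reachable b t ∨
      (G.deleteEdges {s(a, b)}).Reachable z b ∧ (G.deleteEdges {s(a, b)}).Reachable a t := by
  induction w with
  | nil => exact Or.inl .rfl
  | @cons z c t hzc w ih =>
    by_cases hef : s(z, c) = s(a, b)
    · obtain ⟨rfl, rfl⟩ | ⟨rfl, rfl⟩ := Sym2.eq_iff.mp hef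
      · rcases ih with h | ⟨h₁, h₂⟩ | ⟨-, h₂⟩
        · exact Or.inr (Or.inl ⟨.rfl, h⟩)
        · exact Or.inl (h₁.symm.trans h₂)
        · exact Or.inl h₂
      · rcases ih with h | ⟨-, h₂⟩ | ⟨h₁, h₂⟩
        · exact Or.inr (Or.inr ⟨.rfl, h⟩)
        · exact Or.inl h₂
        · exact Or.inl (h₁.symm.trans h₂)
    · have hzc' : (G.deleteEdges {s(a, b)}).Adj z c := by simpa [hef] using hzc
      rcases ih with h | ⟨h₁, h₂⟩ | ⟨h₁, h₂⟩
      · exact Or.inl (hzc'.reachable.trans h)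
      · exact Or.inr (Or.inl ⟨hzc'.reachable.trans h₁, h₂⟩)
      · exact Or.inr (Or.inr ⟨hzc'.reachable.trans h₁, h₂⟩)

theorem Preconnected.reachable_deleteEdges_or (hG : G.Preconnected) (a b z : V) :
    (G.deleteEdges {s(a, b)}).Reachable z a ∨ (G.deleteEdges {s(a, b)}).Reachable z b := by
  obtain ⟨w⟩ := hG z a
  rcases w.reachable_deleteEdges_or (a := a) (b := b) with h | ⟨h, -⟩ | ⟨h, -⟩
  exacts [Or.inl h, Or.inl h, Or.inr h]

theorem Walk.IsTrail.exists_reachable_deleteEdges {x y a b : V} {w : G.Walk x y}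
    (hw : w.IsTrail) (hab : s(a, b) ∈ w.edges) :
    ∃ a' b', s(a', b') = s(a, b) ∧ (G.deleteEdges {s(a, b)}).Reachable x a' ∧
      (G.deleteEdges {s(a, b)}).Reachable b' y := by
  induction w with
  | nil => simp at hab
  | @cons x c y hxc w ih =>
    rw [Walk.isTrail_cons] at hw
    by_cases hef : s(x, c) = s(a, b)
    · refine ⟨x, c, hef, .rfl, (reachable_deleteEdges_iff_exists_walk).mpr ⟨w, hef ▸ hw.2⟩⟩
    · have hxc' : (G.deleteEdges {s(a, b)}).Adj x c := by simpa [hef] using hxc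
      have hab' : s(a, b) ∈ w.edges := by
        simpa [Walk.edges_cons, Ne.symm hef] using hab
      obtain ⟨a', b', he, h₁, h₂⟩ := ih hw.1 hab'
      exact ⟨a', b', he, hxc'.reachable.trans h₁, h₂⟩

theorem IsTree.not_reachable_deleteEdges {a b x y : V} (hG : G.IsTree) (hab : G.Adj a b)
    (hxa : (G.deleteEdges {s(a, b)}).Reachable x a)
    (hby : (G.deleteEdges {s(a, b)}).Reachable b y) :
    ¬ (G.deleteEdges {s(a, b)}).Reachable x y := fun hxy =>
  isBridge_iff.mp (isAcyclic_iff_forall_adj_isBridge.mp hG.isAcyclic hab)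
    (hxa.symm.trans (hxy.trans hby.symm))

theorem IsTree.deleteEdges_sup_edge {a b x y : V} (hG : G.IsTree) (hab : G.Adj a b)
    (hxa : (G.deleteEdges {s(a, b)}).Reachable x a)
    (hby : (G.deleteEdges {s(a, b)}).Reachable b y) :
    (G.deleteEdges {s(a, b)} ⊔ edge x y).IsTree := by
  set H := G.deleteEdges {s(a, b)}
  have hxy := hG.not_reachable_deleteEdges hab hxa hby
  have hne : x ≠ y := by
    rintro rfl
    exact hxy .rfl
  have hHK : H ≤ H ⊔ edge x y := le_sup_left
  have hK : (H ⊔ edge x y).Reachable x y := Adj.reachable (by simp [edge_adj, hne])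
  have := hG.connected.nonempty
  refine ⟨⟨fun z t => ?_⟩,
    (hG.isAcyclic.anti (deleteEdges_le _)).sup_edge_of_not_reachable hxy⟩
  obtain ⟨w⟩ := hG.connected.preconnected z t
  rcases w.reachable_deleteEdges_or (a := a) (b := b) with h | ⟨h₁, h₂⟩ | ⟨h₁, h₂⟩
  · exact h.mono hHK
  · exact ((h₁.trans hxa.symm).mono hHK).trans (hK.trans ((hby.symm.trans h₂).mono hHK))
  · exact ((h₁.trans hby).mono hHK).trans (hK.symm.trans ((hxa.trans h₂).mono hHK))

theorem fromEdgeSet_insert_diff (s : Set (Sym2 V)) (a b x y : V) :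
    fromEdgeSet (insert s(x, y) (s \ {s(a, b)})) =
      (fromEdgeSet s).deleteEdges {s(a, b)} ⊔ edge x y := by
  ext u v
  simp only [fromEdgeSet_adj, sup_adj, deleteEdges_adj, edge_adj, Set.mem_insert_iff,
    Set.mem_sdiff, Set.mem_singleton_iff, Sym2.eq_iff]
  tauto

end SimpleGraph

section SpanningTree

open SimpleGraph Finset

variable {V : Type*} [Fintype V] {T T' : Finset (Sym2 V)}

theorem IsSpanningTree.not_isDiag_s11 (hT : IsSpanningTree ⊤ T) {f : Sym2 V} (hf : f ∈ T) :
    ¬ f.IsDiag := by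
  simpa using hT.1 hf

theorem IsSpanningTree.card_add_one (hT : IsSpanningTree ⊤ T) : #T + 1 = Fintype.card V := by
  classical
  have hT' : (fromEdgeSet (↑T : Set (Sym2 V))).edgeFinset = T := by
    ext f
    simpa using fun hf => hT.not_isDiag_s11 hf
  simpa [hT'] using hT.2.card_edgeFinset

variable [DecidableEq V]

theorem IsSpanningTree.insert_erase {a b x y : V} (hT : IsSpanningTree ⊤ T) (hab : s(a, b) ∈ T)
    (hxa : ((fromEdgeSet (↑T : Set (Sym2 V))).deleteEdges {s(a, b)}).Reachable x a)
    (hby : ((fromEdgeSet (↑T : Set (Sym2 V))).deleteEdges {s(a, b)}).Reachable b y) :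
    IsSpanningTree ⊤ (insert s(x, y) (T.erase s(a, b))) := by
  have hab' : (fromEdgeSet (↑T : Set (Sym2 V))).Adj a b :=
    (fromEdgeSet_adj _).mpr ⟨hab, by simpa using hT.not_isDiag_s11 hab⟩
  have hxy : x ≠ y := by
    rintro rfl
    exact hT.2.not_reachable_deleteEdges hab' hxa hby .rfl
  refine ⟨fun e he => ?_, ?_⟩
  · obtain rfl | he := Finset.mem_insert.mp he
    · simpa using hxy
    · exact hT.1 (Finset.mem_of_mem_erase he)
  · rw [Finset.coe_insert, Finset.coe_erase, fromEdgeSet_insert_diff]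
    exact hT.2.deleteEdges_sup_edge hab' hxa hby

theorem IsSpanningTree.insert_erase_of_mem_edges (hT : IsSpanningTree ⊤ T) {x y : V}
    {p : (fromEdgeSet (↑T : Set (Sym2 V))).Walk x y} (hp : p.IsTrail) {f : Sym2 V}
    (hf : f ∈ p.edges) : f ∈ T ∧ IsSpanningTree ⊤ (insert s(x, y) (T.erase f)) := by
  have hfT : f ∈ T := by
    have := p.edges_subset_edgeSet hf
    rw [edgeSet_fromEdgeSet] at this
    exact this.1
  refine ⟨hfT, ?_⟩
  induction f with
  | _ a b =>
    obtain ⟨a', b', he, hxa, hby⟩ := hp.exists_reachable_deleteEdges hf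
    rw [← he] at hfT hxa hby ⊢
    exact hT.insert_erase hfT hxa hby

theorem IsSpanningTree.exists_insert_erase (hT : IsSpanningTree ⊤ T) {e : Sym2 V}
    (he : ¬ e.IsDiag) : ∃ f ∈ T, IsSpanningTree ⊤ (insert e (T.erase f)) := by
  induction e with
  | _ x y =>
    obtain ⟨p, hp⟩ := (hT.2.connected.preconnected x y).some.toPath
    obtain ⟨f, hf⟩ := List.exists_mem_of_ne_nil p.edges
      (Walk.edges_eq_nil.not.mpr (Walk.not_nil_of_ne (by simpa using he)))
    exact ⟨f, hT.insert_erase_of_mem_edges hp.isTrail hf⟩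

theorem IsSpanningTree.exists_exchange (hT : IsSpanningTree ⊤ T) (hT' : IsSpanningTree ⊤ T')
    {e : Sym2 V} (heT' : e ∈ T') (heT : e ∉ T) :
    ∃ f ∈ T, f ∉ T' ∧ IsSpanningTree ⊤ (insert e (T.erase f)) ∧
      IsSpanningTree ⊤ (insert f (T'.erase e)) := by
  induction e with
  | _ x y =>
    set H' := (fromEdgeSet (↑T' : Set (Sym2 V))).deleteEdges {s(x, y)}
    have hxy' : (fromEdgeSet (↑T' : Set (Sym2 V))).Adj x y :=
      (fromEdgeSet_adj _).mpr ⟨heT', by simpa using hT'.not_isDiag_s11 heT'⟩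
    have hxy : ¬ H'.Reachable x y := hT'.2.not_reachable_deleteEdges hxy' .rfl .rfl
    obtain ⟨p, hp⟩ := (hT.2.connected.preconnected x y).some.toPath
    obtain ⟨⟨⟨a, b⟩, hab⟩, hd, hxa, hxb⟩ := p.exists_boundary_dart {z | H'.Reachable x z} .rfl hxy
    obtain ⟨hfT, hTf⟩ := hT.insert_erase_of_mem_edges hp.isTrail (List.mem_map_of_mem hd)
    have hfT' : s(a, b) ∉ T' := by
      intro hfT'
      refine hxb (hxa.trans (Adj.reachable ?_))
      have hne : s(a, b) ≠ s(x, y) := by rintro h; exact heT (h ▸ hfT)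
      simpa [H', hab.ne, hfT'] using hne
    have hyb : H'.Reachable y b :=
      (hT'.2.connected.preconnected.reachable_deleteEdges_or x y b).resolve_left
        (fun h => hxb h.symm) |>.symm
    exact ⟨s(a, b), hfT, hfT', hTf, hT'.insert_erase heT' (Reachable.symm hxa) hyb⟩

theorem IsSpanningTree.sum_lt_sum_of_forall_lt (hT : IsSpanningTree ⊤ T) {u : Sym2 V → ℝ}
    (hu : ∀ e, ¬ e.IsDiag → e ∉ T → ∀ f ∈ T, IsSpanningTree ⊤ (insert e (T.erase f)) → u f < u e)
    (hT' : IsSpanningTree ⊤ T') (hne : T' ≠ T) : ∑ e ∈ T, u e < ∑ e ∈ T', u e := by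
  -- Trading an edge of `T' \ T` for one of `T \ T'` lowers the weight and brings `T'` nearer `T`.
  induction hk : #(T' \ T) using Nat.strong_induction_on generalizing T' with
  | _ k ih =>
    obtain ⟨e, he⟩ : (T' \ T).Nonempty := by
      refine sdiff_nonempty.mpr fun hsub => hne (eq_of_subset_of_card_le hsub ?_)
      have := hT.card_add_one
      have := hT'.card_add_one
      omega
    obtain ⟨heT', heT⟩ := mem_sdiff.mp he
    obtain ⟨f, hfT, hfT', hTf, hT'f⟩ := hT.exists_exchange hT' heT' heT
    have hlt : ∑ g ∈ insert f (T'.erase e), u g < ∑ g ∈ T', u g := by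
      rw [Finset.sum_insert_erase hfT' heT']
      linarith [hu e (hT'.not_isDiag_s11 heT') heT f hfT hTf]
    by_cases hT'' : insert f (T'.erase e) = T
    · exact hT'' ▸ hlt
    · refine (ih _ ?_ hT'f hT'' rfl).trans hlt
      rw [← hk]
      exact card_lt_card ⟨fun g hg => by grind, fun hsub => by grind⟩

theorem IsSpanningTree.forall_sum_lt_iff (hT : IsSpanningTree ⊤ T) (u : Sym2 V → ℝ) :
    (∀ T', IsSpanningTree ⊤ T' → T' ≠ T → ∑ e ∈ T, u e < ∑ e ∈ T', u e) ↔
      ∀ e, ¬ e.IsDiag → e ∉ T → ∀ f ∈ T, IsSpanningTree ⊤ (insert e (T.erase f)) → u f < u e := by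
  refine ⟨fun h e _ heT f hfT hTf => ?_, fun h T' => hT.sum_lt_sum_of_forall_lt h⟩
  have hne : insert e (T.erase f) ≠ T := fun h => heT (h ▸ mem_insert_self e _)
  have := h _ hTf hne
  rw [Finset.sum_insert_erase heT hfT] at this
  linarith

theorem IsSpanningTree.forall_sum_lt_iff_forall_sSup_lt (hT : IsSpanningTree ⊤ T)
    (u : Sym2 V → ℝ) :
    (∀ T', IsSpanningTree ⊤ T' → T' ≠ T → ∑ e ∈ T, u e < ∑ e ∈ T', u e) ↔
      ∀ e, ¬ e.IsDiag → e ∉ T →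
        sSup (u '' {f | f ∈ T ∧ IsSpanningTree ⊤ (insert e (T.erase f))}) < u e := by
  rw [hT.forall_sum_lt_iff]
  refine forall_congr' fun e => imp_congr_right fun he => imp_congr_right fun _ => ?_
  obtain ⟨f, hf⟩ := hT.exists_insert_erase he
  have hfin : {f | f ∈ T ∧ IsSpanningTree ⊤ (insert e (T.erase f))}.Finite :=
    T.finite_toSet.subset fun f hf => hf.1
  rw [(hfin.image u).csSup_lt_iff (Set.Nonempty.image u ⟨f, hf⟩), Set.forall_mem_image]
  exact ⟨fun h f hf => h f hf.1 hf.2, fun h f hfT hTf => h ⟨hfT, hTf⟩⟩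

end SpanningTree

theorem measurableSet_setOf_forall_mem {ι α : Type*} [MeasurableSpace α] (E : Finset ι)
    {p : ι → α → Prop} (hp : ∀ i ∈ E, MeasurableSet {x | p i x}) :
    MeasurableSet {x | ∀ i ∈ E, p i x} := by
  simpa only [ofPred_forall] using E.measurableSet_biInter hp

theorem Set.indicator_apply_eq_of_mem_iff {α γ β : Type*} [Zero β] {s : Set α} {t : Set γ}
    {f : α → β} {g : γ → β} {a : α} {b : γ} (hst : a ∈ s ↔ b ∈ t) (hfg : f a = g b) :
    s.indicator f a = t.indicator g b := by
  classical
  simp only [indicator_apply, hst, hfg]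

theorem Measurable.measure_inter_Ioi {α : Type*} [MeasurableSpace α] {f : α → ℝ}
    (hf : Measurable f) (ν : Measure ℝ) (A : Set ℝ) : Measurable fun x => ν (A ∩ Ioi (f x)) := by
  have hanti : Antitone fun t => ν (A ∩ Ioi t) := fun _ _ h =>
    measure_mono (inter_subset_inter_right _ (Ioi_subset_Ioi h))
  exact hanti.measurable.comp hf

theorem measure_inter_div_mul_measure {α : Type*} [MeasurableSpace α] (ν : Measure α)
    [IsFiniteMeasure ν] (A s : Set α) : ν (A ∩ s) / ν s * ν s = ν (A ∩ s) :=
  ENNReal.div_mul_cancel' (measure_mono_null inter_subset_right) (absurd · (measure_ne_top _ _))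

section ProductMeasure

variable {ι : Type*} [Fintype ι] {X : ι → Type*} [∀ i, MeasurableSpace (X i)]

theorem lintegral_pi_eq_lintegral_lintegral (μ : ∀ i, Measure (X i)) [∀ i, SigmaFinite (μ i)]
    (p : ι → Prop) [DecidablePred p] {H : (∀ i, X i) → ℝ≥0∞} (hH : Measurable H) :
    ∫⁻ u, H u ∂Measure.pi μ =
      ∫⁻ w, ∫⁻ v, H ((MeasurableEquiv.piEquivPiSubtypeProd X p).symm (w, v))
        ∂Measure.pi (fun i : {i // ¬ p i} => μ i) ∂Measure.pi (fun i : Subtype p => μ i) := by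
  rw [← (measurePreserving_piEquivPiSubtypeProd μ p).symm.lintegral_comp hH]
  exact lintegral_prod _ (hH.comp (MeasurableEquiv.measurable _)).aemeasurable

theorem ae_pi_restrict_mem {α : Type*} [MeasurableSpace α] (μ : ι → Measure α)
    [∀ i, SigmaFinite (μ i)] {s : ι → Set α} (hs : ∀ i, MeasurableSet (s i)) :
    ∀ᵐ u ∂Measure.pi (fun i => (μ i).restrict (s i)), ∀ i, u i ∈ s i :=
  ae_all_iff.mpr fun i => Measure.tendsto_eval_ae_ae.eventually (ae_restrict_mem (hs i))

variable [DecidableEq ι]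

theorem lintegral_restrict_pi_eq_lintegral_mul_prod (μ : ∀ i, Measure (X i))
    [∀ i, IsProbabilityMeasure (μ i)] (E : Finset ι) {S : (∀ i, X i) → ∀ i, Set (X i)}
    {G : (∀ i, X i) → ℝ≥0∞} (hS : ∀ u v, (∀ i ∉ E, u i = v i) → ∀ i ∈ E, S u i = S v i)
    (hG : ∀ u v, (∀ i ∉ E, u i = v i) → G u = G v)
    (hSm : MeasurableSet {u | ∀ i ∈ E, u i ∈ S u i}) (hGm : Measurable G)
    (hSμ : ∀ i ∈ E, Measurable fun u => μ i (S u i)) :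
    ∫⁻ u in {u | ∀ i ∈ E, u i ∈ S u i}, G u ∂Measure.pi μ =
      ∫⁻ u, G u * ∏ i ∈ E, μ i (S u i) ∂Measure.pi μ := by
  set φ := MeasurableEquiv.piEquivPiSubtypeProd X (· ∉ E)
  set νE := Measure.pi fun i : {i // ¬ i ∉ E} => μ i
  set K := {u | ∀ i ∈ E, u i ∈ S u i}
  rw [← lintegral_indicator hSm, lintegral_pi_eq_lintegral_lintegral μ (· ∉ E)
      (hGm.indicator hSm),
    lintegral_pi_eq_lintegral_lintegral μ (· ∉ E) (H := fun u => G u * ∏ i ∈ E, μ i (S u i))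
      (hGm.mul (E.measurable_prod hSμ))]
  refine lintegral_congr fun w => ?_
  obtain ⟨v₀⟩ : Nonempty (∀ i : {i // ¬ i ∉ E}, X i) :=
    ⟨fun i => (nonempty_of_isProbabilityMeasure (μ i)).some⟩
  set u₀ := φ.symm (w, v₀)
  have hagree : ∀ v, ∀ i ∉ E, φ.symm (w, v) i = u₀ i := by
    intro v i hi
    simp [φ, u₀, MeasurableEquiv.piEquivPiSubtypeProd, hi]
  set P : Set (∀ i : {i // ¬ i ∉ E}, X i) := univ.pi fun i => S u₀ i
  have hmem : ∀ v, φ.symm (w, v) ∈ K ↔ v ∈ P := by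
    intro v
    simp only [K, P, mem_ofPred_eq, mem_pi, mem_univ, true_implies]
    constructor
    · intro h i
      have hi := not_not.mp i.2
      rw [← hS _ _ (hagree v) i hi]
      simpa [φ, MeasurableEquiv.piEquivPiSubtypeProd, hi] using h i hi
    · intro h i hi
      rw [hS _ _ (hagree v) i hi]
      simpa [φ, MeasurableEquiv.piEquivPiSubtypeProd, hi] using h ⟨i, not_not.mpr hi⟩
  have hP : MeasurableSet P := by
    convert hSm.preimage (φ.symm.measurable.comp measurable_prodMk_left) using 1
    exact (Set.ext hmem).symm
  calc ∫⁻ v, K.indicator G (φ.symm (w, v)) ∂νE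
      = ∫⁻ v, P.indicator (fun _ => G u₀) v ∂νE :=
        lintegral_congr fun v => indicator_apply_eq_of_mem_iff (hmem v) (hG _ _ (hagree v))
    _ = ∫⁻ v, G u₀ * ∏ i ∈ E, μ i (S u₀ i) ∂νE := by
        rw [lintegral_indicator_const hP, Measure.pi_pi, lintegral_const, measure_univ, mul_one,
          E.prod_subtype (p := fun i => ¬ i ∉ E) (fun i => not_not.symm)]
    _ = _ := by
        refine lintegral_congr fun v => ?_
        rw [hG _ _ (hagree v)]
        exact congrArg _ (E.prod_congr rfl fun i hi => by rw [hS _ _ (hagree v) i hi])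

theorem measure_pi_inter_eq_setLIntegral_prod_div (ν : ι → Measure ℝ)
    [∀ i, IsProbabilityMeasure (ν i)] (E : Finset ι) {m : ι → (ι → ℝ) → ℝ} {A : ι → Set ℝ}
    {B : Set (ι → ℝ)} (hm : ∀ i ∈ E, Measurable (m i))
    (hmE : ∀ u v, (∀ j ∉ E, u j = v j) → ∀ i ∈ E, m i u = m i v)
    (hA : ∀ i ∈ E, MeasurableSet (A i)) (hB : MeasurableSet B)
    (hBE : ∀ u v, (∀ j ∉ E, u j = v j) → (u ∈ B ↔ v ∈ B)) :
    Measure.pi ν ({u | ∀ i ∈ E, m i u < u i} ∩ B ∩ {u | ∀ i ∈ E, u i ∈ A i}) =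
      ∫⁻ u in {u | ∀ i ∈ E, m i u < u i} ∩ B,
        ∏ i ∈ E, ν i (A i ∩ Ioi (m i u)) / ν i (Ioi (m i u)) ∂Measure.pi ν := by
  set F := fun u => ∏ i ∈ E, ν i (A i ∩ Ioi (m i u)) / ν i (Ioi (m i u))
  have hνA : ∀ i ∈ E, Measurable fun u => ν i (A i ∩ Ioi (m i u)) := fun i hi =>
    (hm i hi).measure_inter_Ioi (ν i) (A i)
  have hν : ∀ i ∈ E, Measurable fun u => ν i (Ioi (m i u)) := fun i hi => by
    simpa using (hm i hi).measure_inter_Ioi (ν i) univ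
  have hlhs : {u | ∀ i ∈ E, m i u < u i} ∩ B ∩ {u | ∀ i ∈ E, u i ∈ A i} =
      B ∩ {u | ∀ i ∈ E, u i ∈ A i ∩ Ioi (m i u)} := by
    ext u
    simp only [mem_inter_iff, mem_ofPred_eq, mem_Ioi]
    grind
  calc Measure.pi ν ({u | ∀ i ∈ E, m i u < u i} ∩ B ∩ {u | ∀ i ∈ E, u i ∈ A i})
      = ∫⁻ u in {u | ∀ i ∈ E, u i ∈ A i ∩ Ioi (m i u)}, B.indicator 1 u ∂Measure.pi ν := by
        rw [hlhs, lintegral_indicator_one hB, Measure.restrict_apply hB]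
    _ = ∫⁻ u, B.indicator 1 u * ∏ i ∈ E, ν i (A i ∩ Ioi (m i u)) ∂Measure.pi ν :=
        lintegral_restrict_pi_eq_lintegral_mul_prod ν E
          (fun u v huv i hi => by rw [hmE u v huv i hi])
          (fun u v huv => indicator_apply_eq_of_mem_iff (hBE u v huv) rfl)
          (measurableSet_setOf_forall_mem E fun i hi => (measurable_pi_apply i (hA i hi)).inter
            (measurableSet_lt (hm i hi) (measurable_pi_apply i)))
          (measurable_one.indicator hB) hνA
    _ = ∫⁻ u, B.indicator F u * ∏ i ∈ E, ν i (Ioi (m i u)) ∂Measure.pi ν := by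
        refine lintegral_congr fun u => ?_
        by_cases hu : u ∈ B
        · simp only [indicator_of_mem hu, Pi.one_apply, one_mul, F, ← E.prod_mul_distrib,
            measure_inter_div_mul_measure]
        · simp only [indicator_of_notMem hu, zero_mul]
    _ = ∫⁻ u in {u | ∀ i ∈ E, u i ∈ Ioi (m i u)}, B.indicator F u ∂Measure.pi ν :=
        (lintegral_restrict_pi_eq_lintegral_mul_prod ν E (S := fun u i => Ioi (m i u))
          (G := B.indicator F)
          (fun u v huv i hi => by rw [hmE u v huv i hi])
          (fun u v huv => indicator_apply_eq_of_mem_iff (hBE u v huv)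
            (E.prod_congr rfl fun i hi => by rw [hmE u v huv i hi]))
          (measurableSet_setOf_forall_mem E fun i hi =>
            measurableSet_lt (hm i hi) (measurable_pi_apply i))
          ((E.measurable_prod fun i hi => (hνA i hi).div (hν i hi)).indicator hB) hν).symm
    _ = _ := by
        rw [lintegral_indicator hB, Measure.restrict_restrict hB, inter_comm]
        rfl

end ProductMeasure

theorem measurable_sSup_image {ι : Type*} [Finite ι] (s : Set ι) :
    Measurable fun u : ι → ℝ => sSup (u '' s) := by
  have := Fintype.ofFinite ι
  classical
  rcases s.eq_empty_or_nonempty with rfl | hs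
  · simp only [image_empty, Real.sSup_empty]
    exact measurable_const
  · have hs' : s.toFinset.Nonempty := by simpa using hs
    convert Finset.measurable_sup' hs' (f := fun i (u : ι → ℝ) => u i)
      (fun i _ => measurable_pi_apply i) using 1
    ext u
    rw [Finset.sup'_apply, Finset.sup'_eq_csSup_image, coe_toFinset]

theorem restrict_Icc_inter_Ioi_div {A : Set ℝ} {t : ℝ} (ht : 0 ≤ t) :
    volume.restrict (Icc 0 1) (A ∩ Ioi t) / volume.restrict (Icc 0 1) (Ioi t) =
      (ENNReal.ofReal (1 - t))⁻¹ * volume (A ∩ Icc t 1) := by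
  have hIoc : Ioi t ∩ Icc 0 1 = Ioc t 1 := by
    ext x
    simp only [mem_inter_iff, mem_Ioi, mem_Icc, mem_Ioc]
    constructor
    · rintro ⟨h₁, -, h₂⟩
      exact ⟨h₁, h₂⟩
    · rintro ⟨h₁, h₂⟩
      exact ⟨h₁, ht.trans h₁.le, h₂⟩
  rw [Measure.restrict_apply' measurableSet_Icc, Measure.restrict_apply' measurableSet_Icc,
    inter_assoc, hIoc, Real.volume_Ioc, ENNReal.div_eq_inv_mul,
    measure_congr ((Filter.EventuallyEq.refl _ A).inter (Ioc_ae_eq_Icc (μ := volume)))]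

/- The tree edges on the fundamental path of `e` are encoded as the `f ∈ T` for which
`insert e (T.erase f)` is again a spanning tree, and the conditional law is stated in integrated
form, against every event `B` depending only on the tree labels. -/
open Classical in
theorem stmt_11 (n : ℕ) (T : Finset (Sym2 (Fin n)))
    (hT : IsSpanningTree (⊤ : SimpleGraph (Fin n)) T)
    (A : Sym2 (Fin n) → Set ℝ) (hA : ∀ e, MeasurableSet (A e))
    (B : Set (Sym2 (Fin n) → ℝ)) (hB : MeasurableSet B)
    (hBdep : ∀ u u' : Sym2 (Fin n) → ℝ, (∀ e ∈ T, u e = u' e) → (u ∈ B ↔ u' ∈ B)) :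
    (Measure.pi fun _ : Sym2 (Fin n) => volume.restrict (Set.Icc (0 : ℝ) 1))
        ({u : Sym2 (Fin n) → ℝ |
            ∀ T' : Finset (Sym2 (Fin n)), IsSpanningTree (⊤ : SimpleGraph (Fin n)) T' →
              T' ≠ T → ∑ e ∈ T, u e < ∑ e ∈ T', u e} ∩ B ∩
          {u : Sym2 (Fin n) → ℝ | ∀ e : Sym2 (Fin n), ¬ e.IsDiag → e ∉ T → u e ∈ A e})
      = ∫⁻ u in
          ({u : Sym2 (Fin n) → ℝ |
            ∀ T' : Finset (Sym2 (Fin n)), IsSpanningTree (⊤ : SimpleGraph (Fin n)) T' →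
              T' ≠ T → ∑ e ∈ T, u e < ∑ e ∈ T', u e} ∩ B),
          ∏ e ∈ Finset.univ.filter (fun e : Sym2 (Fin n) => ¬ e.IsDiag ∧ e ∉ T),
            ((ENNReal.ofReal
                (1 - sSup (u '' {f | f ∈ T ∧
                  IsSpanningTree (⊤ : SimpleGraph (Fin n)) (insert e (T.erase f))})))⁻¹ *
              volume (A e ∩ Set.Icc
                (sSup (u '' {f | f ∈ T ∧
                  IsSpanningTree (⊤ : SimpleGraph (Fin n)) (insert e (T.erase f))})) 1))
          ∂(Measure.pi fun _ : Sym2 (Fin n) => volume.restrict (Set.Icc (0 : ℝ) 1)) := by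
  set P : Sym2 (Fin n) → Set (Sym2 (Fin n)) := fun e =>
    {f | f ∈ T ∧ IsSpanningTree (⊤ : SimpleGraph (Fin n)) (insert e (T.erase f))}
  set Ext := Finset.univ.filter fun e : Sym2 (Fin n) => ¬ e.IsDiag ∧ e ∉ T
  have hagree : ∀ u v : Sym2 (Fin n) → ℝ, (∀ f ∉ Ext, u f = v f) → ∀ f ∈ T, u f = v f :=
    fun u v h f hf => h f (by simp [Ext, hf])
  have hM : {u : Sym2 (Fin n) → ℝ | ∀ T' : Finset (Sym2 (Fin n)),
      IsSpanningTree (⊤ : SimpleGraph (Fin n)) T' → T' ≠ T → ∑ e ∈ T, u e < ∑ e ∈ T', u e} =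
      {u | ∀ e ∈ Ext, sSup (u '' P e) < u e} := by
    ext u
    simp [Ext, hT.forall_sum_lt_iff_forall_sSup_lt, P]
  have hC : {u : Sym2 (Fin n) → ℝ | ∀ e : Sym2 (Fin n), ¬ e.IsDiag → e ∉ T → u e ∈ A e} =
      {u | ∀ e ∈ Ext, u e ∈ A e} := by
    ext u
    simp [Ext]
  have : IsProbabilityMeasure (volume.restrict (Icc (0 : ℝ) 1)) := ⟨by simp⟩
  rw [hM, hC]
  refine (measure_pi_inter_eq_setLIntegral_prod_div _ Ext
    (fun e _ => measurable_sSup_image (P e))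
    (fun u v huv e _ => congrArg sSup (image_congr fun f hf => hagree u v huv f hf.1))
    (fun e _ => hA e) hB (fun u v huv => hBdep u v (hagree u v huv))).trans ?_
  refine lintegral_congr_ae (ae_restrict_of_ae ?_)
  filter_upwards [ae_pi_restrict_mem (fun _ => volume) fun _ => measurableSet_Icc] with u hu
  exact Finset.prod_congr rfl fun e _ =>
    restrict_Icc_inter_Ioi_div (Real.sSup_nonneg (forall_mem_image.mpr fun f _ => (hu f).1))
end

section
/- Let U_{2/n} be the event that the Erdős–Rényi graph G_{n,2/n} (edges e with U_e ≤ 2/n) has a fixed set H of h vertices designated as the giant, and let u ≠ v be two isolated vertices. For X_w = 1[the smallest-labeled edge incident to w (in K_n) has its other endpoint in H] (w ∈ {u,v}), the conditional covariance equals Cov(X_u, X_v) = h^2 / ((n−1)^2 (2n−3)); in particular it is positive and equals (E X_u)^2/(2n−3). -/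
/-!
For labels that are exchangeable and a.s. distinct on a finite set `R`, every element of a
subset `S ⊆ R` is equally likely to carry the smallest label of `S`, even conditionally on an
event that is invariant under permutations of `S`; hence `E X_w = h / (n - 1)`. For the joint event, split
according to which of the `2n - 3` edges at `u` or `v` carries the overall minimum: if it is
`s(u, x)`, then `X_u = 1` forces `x ∈ H`, and conditionally the minimum at `v` is uniform over
the `n - 1` edges at `v`. This gives `E (X_u X_v) = 2 h² / ((2n - 3)(n - 1))`.
-/

open MeasureTheory Finset

lemma Equiv.swap_apply_mem_iff {α : Type*} [DecidableEq α] {s : Set α} {a b x : α}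
    (ha : a ∈ s) (hb : b ∈ s) : Equiv.swap a b x ∈ s ↔ x ∈ s := by
  rw [Equiv.swap_apply_def]
  split_ifs with hxa hxb
  · exact ⟨fun _ => hxa ▸ ha, fun _ => hb⟩
  · exact ⟨fun _ => hxb ▸ hb, fun _ => ha⟩
  · rfl

section UniqueArgmin

variable {α : Type*}

def uniqueArgmin (S : Finset α) (a : α) : Set (α → ℝ) :=
  {g | ∀ b ∈ S, b ≠ a → g a < g b}

def argminMem (S A : Finset α) : Set (α → ℝ) :=
  ⋃ a ∈ A, uniqueArgmin S a

lemma mem_argminMem {S A : Finset α} {g : α → ℝ} :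
    g ∈ argminMem S A ↔ ∃ a ∈ A, g ∈ uniqueArgmin S a := by
  simp only [argminMem, Set.mem_iUnion, exists_prop]

lemma measurableSet_uniqueArgmin (S : Finset α) (a : α) :
    MeasurableSet (uniqueArgmin S a) := by
  have : uniqueArgmin S a = ⋂ b ∈ S, {g | b ≠ a → g a < g b} := by
    ext g; simp [uniqueArgmin]
  rw [this]
  refine S.measurableSet_biInter fun b _ => ?_
  by_cases hba : b = a
  · simp [hba]
  · simpa [hba] using measurableSet_lt (measurable_pi_apply a) (measurable_pi_apply b)

lemma measurableSet_argminMem (S A : Finset α) : MeasurableSet (argminMem S A) :=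
  A.measurableSet_biUnion fun a _ => measurableSet_uniqueArgmin S a

lemma uniqueArgmin_mono {S T : Finset α} (hST : S ⊆ T) (a : α) :
    uniqueArgmin T a ⊆ uniqueArgmin S a :=
  fun _ hg b hb => hg b (hST hb)

lemma eq_of_mem_uniqueArgmin {S : Finset α} {a b : α} {g : α → ℝ} (ha : a ∈ S) (hb : b ∈ S)
    (hga : g ∈ uniqueArgmin S a) (hgb : g ∈ uniqueArgmin S b) : a = b := by
  by_contra hab
  exact lt_asymm (hga b hb (Ne.symm hab)) (hgb a ha hab)

lemma pairwiseDisjoint_uniqueArgmin (S : Finset α) :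
    (S : Set α).PairwiseDisjoint (uniqueArgmin S) :=
  fun _ ha _ hb hab => Set.disjoint_left.mpr fun _ hga hgb =>
    hab (eq_of_mem_uniqueArgmin ha hb hga hgb)

lemma exists_mem_uniqueArgmin {S : Finset α} (hS : S.Nonempty) {g : α → ℝ}
    (hg : Set.InjOn g S) : ∃ a ∈ S, g ∈ uniqueArgmin S a := by
  obtain ⟨a, ha, hmin⟩ := S.exists_min_image g hS
  exact ⟨a, ha, fun b hb hba => (hmin b hb).lt_of_ne fun h => hba (hg ha hb h).symm⟩

lemma comp_mem_uniqueArgmin_iff {S : Finset α} (π : Equiv.Perm α) (hπ : ∀ b, π b ∈ S ↔ b ∈ S)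
    {g : α → ℝ} {a : α} : g ∘ π ∈ uniqueArgmin S a ↔ g ∈ uniqueArgmin S (π a) := by
  constructor
  · intro h b hb hba
    simpa using h (π.symm b) ((hπ _).mp (by simpa using hb)) (by rintro rfl; simp at hba)
  · exact fun h b hb hba => h (π b) ((hπ b).mpr hb) (π.injective.ne hba)

lemma mem_argminMem_inter_argminMem_iff [DecidableEq α] {R S T A B : Finset α}
    (hR : R = S ∪ T) (hAS : A ⊆ S) (hBT : B ⊆ T) {g : α → ℝ} (hg : Set.InjOn g R) :
    g ∈ argminMem S A ∩ argminMem T B ↔ g ∈ (⋃ c ∈ A, uniqueArgmin R c ∩ argminMem T B) ∪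
      ⋃ c ∈ B, uniqueArgmin R c ∩ argminMem S A := by
  have hSR : S ⊆ R := hR ▸ subset_union_left
  have hTR : T ⊆ R := hR ▸ subset_union_right
  simp only [Set.mem_union, Set.mem_inter_iff, Set.mem_iUnion, exists_prop]
  constructor
  · rintro ⟨hgA, hgB⟩
    obtain ⟨a, ha, hga⟩ := mem_argminMem.mp hgA
    obtain ⟨b, hb, hgb⟩ := mem_argminMem.mp hgB
    obtain ⟨c, hcR, hc⟩ := exists_mem_uniqueArgmin ⟨a, hSR (hAS ha)⟩ hg
    rcases mem_union.mp (hR ▸ hcR) with hcS | hcT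
    · obtain rfl := eq_of_mem_uniqueArgmin hcS (hAS ha) (uniqueArgmin_mono hSR c hc) hga
      exact Or.inl ⟨c, ha, hc, hgB⟩
    · obtain rfl := eq_of_mem_uniqueArgmin hcT (hBT hb) (uniqueArgmin_mono hTR c hc) hgb
      exact Or.inr ⟨c, hb, hc, hgA⟩
  · rintro (⟨c, hc, hgc, hgB⟩ | ⟨c, hc, hgc, hgA⟩)
    · exact ⟨mem_argminMem.mpr ⟨c, hc, uniqueArgmin_mono hSR c hgc⟩, hgB⟩
    · exact ⟨hgA, mem_argminMem.mpr ⟨c, hc, uniqueArgmin_mono hTR c hgc⟩⟩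

end UniqueArgmin

section Exchangeable

variable {α : Type*} [DecidableEq α]

/-- Transpositions generate all permutations of `R` that fix its complement. -/
def ExchangeableOn (ν : Measure (α → ℝ)) (R : Finset α) : Prop :=
  ∀ a ∈ R, ∀ b ∈ R, ν.map (fun g => g ∘ Equiv.swap a b) = ν

variable {ν : Measure (α → ℝ)} {R S T A B : Finset α}

lemma ExchangeableOn.measureReal_preimage (hν : ExchangeableOn ν R) {a b : α} (ha : a ∈ R)
    (hb : b ∈ R) {E : Set (α → ℝ)} (hE : MeasurableSet E) :
    ν.real ((fun g => g ∘ Equiv.swap a b) ⁻¹' E) = ν.real E := by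
  rw [← map_measureReal_apply (by fun_prop) hE, hν a ha b hb]

lemma preimage_comp_swap_uniqueArgmin {a b : α} (ha : a ∈ R) (hb : b ∈ R) (c : α) :
    (fun g => g ∘ Equiv.swap a b) ⁻¹' uniqueArgmin R c = uniqueArgmin R (Equiv.swap a b c) := by
  ext g
  exact comp_mem_uniqueArgmin_iff _ fun _ => Equiv.swap_apply_mem_iff ha hb

variable [IsProbabilityMeasure ν]

lemma ExchangeableOn.measureReal_inter_uniqueArgmin (hν : ExchangeableOn ν R)
    (hinj : ∀ᵐ g ∂ν, Set.InjOn g R) (hSR : S ⊆ R) {E : Set (α → ℝ)} (hE : MeasurableSet E)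
    (hEinv : ∀ b ∈ S, ∀ b' ∈ S, (fun g => g ∘ Equiv.swap b b') ⁻¹' E = E) {a : α}
    (ha : a ∈ S) : ν.real (E ∩ uniqueArgmin S a) = ν.real E / #S := by
  have hconst : ∀ b ∈ S, ν.real (E ∩ uniqueArgmin S b) = ν.real (E ∩ uniqueArgmin S a) := by
    intro b hb
    rw [← hν.measureReal_preimage (hSR hb) (hSR ha) (hE.inter (measurableSet_uniqueArgmin S a)),
      Set.preimage_inter, hEinv b hb a ha, preimage_comp_swap_uniqueArgmin hb ha,
      Equiv.swap_apply_right]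
  have hcover : (E ∩ ⋃ b ∈ S, uniqueArgmin S b : Set (α → ℝ)) =ᵐ[ν] E := by
    refine Filter.eventuallyEq_set.mpr ?_
    filter_upwards [hinj] with g hg
    simp only [Set.mem_inter_iff, Set.mem_iUnion, exists_prop, and_iff_left_iff_imp]
    exact fun _ => exists_mem_uniqueArgmin ⟨a, ha⟩ (hg.mono (by simpa using hSR))
  have hsum : ∑ b ∈ S, ν.real (E ∩ uniqueArgmin S b) = ν.real E := by
    rw [← measureReal_biUnion_finset
        ((pairwiseDisjoint_uniqueArgmin S).mono fun _ => Set.inter_subset_right)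
        fun b _ => hE.inter (measurableSet_uniqueArgmin S b),
      ← Set.inter_iUnion₂, measureReal_congr hcover]
  rw [Finset.sum_congr rfl hconst, Finset.sum_const, nsmul_eq_mul] at hsum
  have hS : (0 : ℝ) < #S := by exact_mod_cast Finset.card_pos.mpr ⟨a, ha⟩
  rw [← hsum]
  field_simp

lemma ExchangeableOn.measureReal_uniqueArgmin (hν : ExchangeableOn ν R)
    (hinj : ∀ᵐ g ∂ν, Set.InjOn g R) (hSR : S ⊆ R) {a : α} (ha : a ∈ S) :
    ν.real (uniqueArgmin S a) = 1 / #S := by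
  simpa using hν.measureReal_inter_uniqueArgmin hinj hSR MeasurableSet.univ (by simp) ha

lemma ExchangeableOn.measureReal_argminMem (hν : ExchangeableOn ν R)
    (hinj : ∀ᵐ g ∂ν, Set.InjOn g R) (hSR : S ⊆ R) (hAS : A ⊆ S) :
    ν.real (argminMem S A) = #A / #S := by
  rw [argminMem, measureReal_biUnion_finset ((pairwiseDisjoint_uniqueArgmin S).subset hAS)
      fun a _ => measurableSet_uniqueArgmin S a,
    Finset.sum_congr rfl fun a ha => hν.measureReal_uniqueArgmin hinj hSR (hAS ha),
    Finset.sum_const, nsmul_eq_mul]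
  ring

lemma ExchangeableOn.measureReal_uniqueArgmin_inter_argminMem (hν : ExchangeableOn ν R)
    (hinj : ∀ᵐ g ∂ν, Set.InjOn g R) (hTR : T ⊆ R) (hBT : B ⊆ T) {c : α} (hc : c ∈ R)
    (hcT : c ∉ T) : ν.real (uniqueArgmin R c ∩ argminMem T B) = #B / (#R * #T) := by
  rw [argminMem, Set.inter_iUnion₂, measureReal_biUnion_finset
      (((pairwiseDisjoint_uniqueArgmin T).subset hBT).mono fun _ => Set.inter_subset_right)
      fun b _ => (measurableSet_uniqueArgmin R c).inter (measurableSet_uniqueArgmin T b)]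
  have hinv : ∀ b ∈ T, ∀ b' ∈ T,
      (fun g => g ∘ Equiv.swap b b') ⁻¹' uniqueArgmin R c = uniqueArgmin R c :=
    fun b hb b' hb' => by
      rw [preimage_comp_swap_uniqueArgmin (hTR hb) (hTR hb'), Equiv.swap_apply_of_ne_of_ne
        (ne_of_mem_of_not_mem hb hcT).symm (ne_of_mem_of_not_mem hb' hcT).symm]
  rw [Finset.sum_congr rfl fun b hb => hν.measureReal_inter_uniqueArgmin hinj hTR
      (measurableSet_uniqueArgmin R c) hinv (hBT hb),
    hν.measureReal_uniqueArgmin hinj subset_rfl hc, Finset.sum_const, nsmul_eq_mul]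
  ring

lemma ExchangeableOn.measureReal_argminMem_inter_argminMem (hν : ExchangeableOn ν R)
    (hinj : ∀ᵐ g ∂ν, Set.InjOn g R) (hR : R = S ∪ T) (hA : A ⊆ S \ T) (hB : B ⊆ T \ S) :
    ν.real (argminMem S A ∩ argminMem T B) = #A * #B * (1 / (#R * #T) + 1 / (#R * #S)) := by
  have hSR : S ⊆ R := hR ▸ subset_union_left
  have hTR : T ⊆ R := hR ▸ subset_union_right
  have hAS : A ⊆ S := hA.trans sdiff_subset
  have hBT : B ⊆ T := hB.trans sdiff_subset
  have hsplit : (argminMem S A ∩ argminMem T B : Set (α → ℝ)) =ᵐ[ν]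
      ((⋃ c ∈ A, uniqueArgmin R c ∩ argminMem T B) ∪ ⋃ c ∈ B, uniqueArgmin R c ∩ argminMem S A :
        Set (α → ℝ)) :=
    Filter.eventuallyEq_set.mpr <|
      hinj.mono fun _ hg => mem_argminMem_inter_argminMem_iff hR hAS hBT hg
  have hdisj : ∀ {C : Finset α}, C ⊆ R → ∀ E : Set (α → ℝ),
      (C : Set α).PairwiseDisjoint fun c => uniqueArgmin R c ∩ E :=
    fun hCR _ => ((pairwiseDisjoint_uniqueArgmin R).subset (by simpa using hCR)).mono
      fun _ => Set.inter_subset_left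
  have hAB : Disjoint (⋃ c ∈ A, uniqueArgmin R c ∩ argminMem T B)
      (⋃ c ∈ B, uniqueArgmin R c ∩ argminMem S A) := by
    simp only [Set.disjoint_iUnion_left, Set.disjoint_iUnion_right]
    intro b hb a ha
    refine Set.disjoint_left.mpr fun g hga hgb => ?_
    obtain rfl := eq_of_mem_uniqueArgmin (hSR (hAS ha)) (hTR (hBT hb)) hga.1 hgb.1
    exact (mem_sdiff.mp (hA ha)).2 (hBT hb)
  rw [measureReal_congr hsplit, measureReal_union hAB (B.measurableSet_biUnion fun c _ =>
      (measurableSet_uniqueArgmin R c).inter (measurableSet_argminMem S A))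
      (measure_ne_top ν _) (measure_ne_top ν _),
    measureReal_biUnion_finset (hdisj (hAS.trans hSR) _)
      fun c _ => (measurableSet_uniqueArgmin R c).inter (measurableSet_argminMem T B),
    measureReal_biUnion_finset (hdisj (hBT.trans hTR) _)
      fun c _ => (measurableSet_uniqueArgmin R c).inter (measurableSet_argminMem S A),
    Finset.sum_congr rfl fun c hc => hν.measureReal_uniqueArgmin_inter_argminMem hinj hTR hBT
      (hSR (hAS hc)) (mem_sdiff.mp (hA hc)).2,
    Finset.sum_congr rfl fun c hc => hν.measureReal_uniqueArgmin_inter_argminMem hinj hSR hAS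
      (hTR (hBT hc)) (mem_sdiff.mp (hB hc)).2,
    Finset.sum_const, Finset.sum_const, nsmul_eq_mul, nsmul_eq_mul]
  ring

end Exchangeable

namespace SimpleGraph

variable {V : Type*} [Fintype V] [DecidableEq V]

lemma incidenceFinset_top_eq_image (w : V) :
    (⊤ : SimpleGraph V).incidenceFinset w = (univ.erase w).image (fun y => s(w, y)) := by
  ext e
  induction e using Sym2.ind with
  | _ a b =>
    simp only [mem_incidenceFinset, mk'_mem_incidenceSet_iff, top_adj, mem_image, mem_erase,
      mem_univ, and_true]
    constructor
    · rintro ⟨hab, rfl | rfl⟩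
      · exact ⟨b, hab.symm, rfl⟩
      · exact ⟨a, hab, Sym2.eq_swap⟩
    · rintro ⟨y, hyw, hy⟩
      rcases Sym2.eq_iff.mp hy with ⟨rfl, rfl⟩ | ⟨rfl, rfl⟩
      · exact ⟨hyw.symm, Or.inl rfl⟩
      · exact ⟨hyw, Or.inr rfl⟩

lemma cast_card_incidenceFinset_top (w : V) :
    (#((⊤ : SimpleGraph V).incidenceFinset w) : ℝ) = Fintype.card V - 1 := by
  rw [card_incidenceFinset_eq_degree, complete_graph_degree w,
    Nat.cast_sub (Fintype.card_pos_iff.mpr ⟨w⟩), Nat.cast_one]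

lemma cast_card_incidenceFinset_top_union {u v : V} (huv : u ≠ v) :
    (#((⊤ : SimpleGraph V).incidenceFinset u ∪ (⊤ : SimpleGraph V).incidenceFinset v) : ℝ) =
      2 * Fintype.card V - 3 := by
  have hinter : (⊤ : SimpleGraph V).incidenceFinset u ∩ (⊤ : SimpleGraph V).incidenceFinset v =
      {s(u, v)} := by
    rw [← coe_inj, coe_inter, coe_incidenceFinset, coe_incidenceFinset, coe_singleton,
      incidenceSet_inter_incidenceSet_of_adj _ huv]
  have hsum := congrArg (Nat.cast (R := ℝ)) (card_union_add_card_inter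
    ((⊤ : SimpleGraph V).incidenceFinset u) ((⊤ : SimpleGraph V).incidenceFinset v))
  push_cast [hinter, card_singleton, cast_card_incidenceFinset_top] at hsum
  linarith

lemma coe_incidenceFinset_top_union (u v : V) :
    (((⊤ : SimpleGraph V).incidenceFinset u ∪ (⊤ : SimpleGraph V).incidenceFinset v : Finset _) :
      Set (Sym2 V)) = {e | (u ∈ e ∨ v ∈ e) ∧ ¬ e.IsDiag} := by
  ext e
  simp only [coe_union, coe_incidenceFinset, Set.mem_union, incidenceSet, edgeSet_top,
    Set.mem_ofPred_eq, Set.mem_compl_iff, Sym2.mem_diagSet]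
  tauto

lemma image_mk_subset_incidenceFinset_top {H : Finset V} {w : V} (hw : w ∉ H) :
    H.image (fun x => s(w, x)) ⊆ (⊤ : SimpleGraph V).incidenceFinset w := by
  intro e he
  obtain ⟨x, hx, rfl⟩ := mem_image.mp he
  simpa using (ne_of_mem_of_not_mem hx hw).symm

lemma image_mk_subset_incidenceFinset_top_sdiff {H : Finset V} {u v : V} (hu : u ∉ H)
    (hv : v ∉ H) (huv : u ≠ v) :
    H.image (fun x => s(u, x)) ⊆
      (⊤ : SimpleGraph V).incidenceFinset u \ (⊤ : SimpleGraph V).incidenceFinset v := by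
  intro e he
  obtain ⟨x, hx, rfl⟩ := mem_image.mp he
  have hxu : x ≠ u := ne_of_mem_of_not_mem hx hu
  have hxv : x ≠ v := ne_of_mem_of_not_mem hx hv
  simp only [mem_sdiff, mem_incidenceFinset, mk'_mem_incidenceSet_iff, top_adj]
  grind

/-- The event `X_w = 1`. -/
def minEdgeInto (w : V) (H : Finset V) : Set (Sym2 V → ℝ) :=
  argminMem ((⊤ : SimpleGraph V).incidenceFinset w) (H.image fun x => s(w, x))

lemma mem_minEdgeInto {w : V} {H : Finset V} {g : Sym2 V → ℝ} :
    g ∈ minEdgeInto w H ↔ ∃ x ∈ H, ∀ y, y ≠ w → y ≠ x → g s(w, x) < g s(w, y) := by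
  simp +contextual [minEdgeInto, mem_argminMem, uniqueArgmin, incidenceFinset_top_eq_image]

lemma measurableSet_minEdgeInto (w : V) (H : Finset V) : MeasurableSet (minEdgeInto w H) :=
  measurableSet_argminMem _ _

variable {ν : Measure (Sym2 V → ℝ)} [IsProbabilityMeasure ν] {R : Finset (Sym2 V)}
  {H : Finset V}

lemma measureReal_minEdgeInto (hν : ExchangeableOn ν R) (hinj : ∀ᵐ g ∂ν, Set.InjOn g R)
    {w : V} (hwR : (⊤ : SimpleGraph V).incidenceFinset w ⊆ R) (hw : w ∉ H) :
    ν.real (minEdgeInto w H) = #H / (Fintype.card V - 1) := by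
  rw [minEdgeInto, hν.measureReal_argminMem hinj hwR (image_mk_subset_incidenceFinset_top hw),
    card_image_of_injective _ fun _ _ => Sym2.congr_right.mp, cast_card_incidenceFinset_top]

lemma measureReal_minEdgeInto_inter_minEdgeInto {u v : V}
    (hν : ExchangeableOn ν ((⊤ : SimpleGraph V).incidenceFinset u ∪
      (⊤ : SimpleGraph V).incidenceFinset v))
    (hinj : ∀ᵐ g ∂ν, Set.InjOn g ↑((⊤ : SimpleGraph V).incidenceFinset u ∪
      (⊤ : SimpleGraph V).incidenceFinset v))
    (huv : u ≠ v) (hu : u ∉ H) (hv : v ∉ H) :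
    ν.real (minEdgeInto u H ∩ minEdgeInto v H) =
      2 * #H ^ 2 / ((2 * Fintype.card V - 3) * (Fintype.card V - 1)) := by
  rw [minEdgeInto, minEdgeInto, hν.measureReal_argminMem_inter_argminMem hinj rfl
      (image_mk_subset_incidenceFinset_top_sdiff hu hv huv)
      (image_mk_subset_incidenceFinset_top_sdiff hv hu huv.symm),
    card_image_of_injective _ fun _ _ => Sym2.congr_right.mp,
    card_image_of_injective _ fun _ _ => Sym2.congr_right.mp,
    cast_card_incidenceFinset_top_union huv, cast_card_incidenceFinset_top,
    cast_card_incidenceFinset_top]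
  ring

end SimpleGraph

section RandomVector

variable {Ω α : Type*} [MeasurableSpace Ω] {μ : Measure Ω} {L : Ω → α → ℝ}

lemma measurableSet_injOn [Countable α] (R : Set α) :
    MeasurableSet {g : α → ℝ | Set.InjOn g R} := by
  simp only [Set.InjOn, measurableSet_setOfPred]
  refine .forall fun a => .imp measurable_const <| .forall fun b => .imp measurable_const <|
    .imp ?_ measurable_const
  exact measurableSet_setOfPred.mp
    (measurableSet_eq_fun (measurable_pi_apply a) (measurable_pi_apply b))

lemma ae_injOn_map [Countable α] (hL : Measurable L) {R : Set α}
    (h : ∀ᵐ ω ∂μ, ∀ a ∈ R, ∀ b ∈ R, a ≠ b → L ω a ≠ L ω b) :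
    ∀ᵐ g ∂(μ.map L), Set.InjOn g R := by
  rw [ae_map_iff hL.aemeasurable (measurableSet_injOn R)]
  filter_upwards [h] with ω hω a ha b hb hab
  by_contra hne
  exact hω a ha b hb hne hab

lemma exchangeableOn_map [DecidableEq α] (hL : Measurable L) {R : Finset α}
    (h : ∀ π : α ≃ α, (∀ a, a ∈ (R : Set α) ↔ π a ∈ (R : Set α)) →
      (∀ a ∉ (R : Set α), π a = a) → μ.map (fun ω a => L ω (π a)) = μ.map L) :
    ExchangeableOn (μ.map L) R := fun a ha b hb => by
  rw [Measure.map_map (by fun_prop) hL]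
  exact h _ (fun _ => (Equiv.swap_apply_mem_iff ha hb).symm) fun c hc =>
    Equiv.swap_apply_of_ne_of_ne (ne_of_mem_of_not_mem ha hc).symm
      (ne_of_mem_of_not_mem hb hc).symm

lemma integral_ite_eq_measureReal_map (hL : Measurable L) {E : Set (α → ℝ)}
    (hE : MeasurableSet E) {p : Ω → Prop} [DecidablePred p] (hp : ∀ ω, p ω ↔ L ω ∈ E) :
    ∫ ω, (if p ω then (1 : ℝ) else 0) ∂μ = (μ.map L).real E := by
  rw [map_measureReal_apply hL hE, ← integral_indicator_one (hL hE)]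
  congr 1 with ω
  classical
  rw [Set.indicator_apply]
  exact if_congr (hp ω) rfl rfl

end RandomVector

open Classical in
theorem stmt_15 {Ω : Type*} [MeasurableSpace Ω] (μ : Measure Ω) [IsProbabilityMeasure μ]
    (n : ℕ) (H : Finset (Fin n)) (h : ℕ) (hHcard : H.card = h) (hh : 1 ≤ h)
    (u v : Fin n) (huv : u ≠ v) (hu : u ∉ H) (hv : v ∉ H)
    (ℓ : Sym2 (Fin n) → Ω → ℝ)
    (hmeas : ∀ e, Measurable (ℓ e))
    (Rel : Set (Sym2 (Fin n)))
    (hRel : Rel = {e : Sym2 (Fin n) | (u ∈ e ∨ v ∈ e) ∧ ¬ e.IsDiag})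
    (hdist : ∀ᵐ ω ∂μ, ∀ e ∈ Rel, ∀ f ∈ Rel, e ≠ f → ℓ e ω ≠ ℓ f ω)
    (hexch : ∀ π : Sym2 (Fin n) ≃ Sym2 (Fin n),
      (∀ e, e ∈ Rel ↔ π e ∈ Rel) → (∀ e ∉ Rel, π e = e) →
      Measure.map (fun ω => fun e => ℓ (π e) ω) μ
        = Measure.map (fun ω => fun e => ℓ e ω) μ) :
    let X : Fin n → Ω → ℝ := fun w ω =>
      if ∃ x ∈ H, ∀ y : Fin n, y ≠ w → y ≠ x → ℓ s(w, x) ω < ℓ s(w, y) ω then 1 else 0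
    ((∫ ω, X u ω * X v ω ∂μ) - (∫ ω, X u ω ∂μ) * (∫ ω, X v ω ∂μ)
        = (h : ℝ) ^ 2 / (((n : ℝ) - 1) ^ 2 * (2 * (n : ℝ) - 3))) ∧
    (0 < (∫ ω, X u ω * X v ω ∂μ) - (∫ ω, X u ω ∂μ) * (∫ ω, X v ω ∂μ)) ∧
    ((∫ ω, X u ω * X v ω ∂μ) - (∫ ω, X u ω ∂μ) * (∫ ω, X v ω ∂μ)
        = (∫ ω, X u ω ∂μ) ^ 2 / (2 * (n : ℝ) - 3)) := by
  intro X
  set L : Ω → Sym2 (Fin n) → ℝ := fun ω e => ℓ e ω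
  have hL : Measurable L := measurable_pi_lambda _ hmeas
  have := Measure.isProbabilityMeasure_map (μ := μ) hL.aemeasurable
  rw [← SimpleGraph.coe_incidenceFinset_top_union u v] at hRel
  subst hRel
  have hν := exchangeableOn_map hL hexch
  have hinj := ae_injOn_map hL hdist
  have hmem : ∀ w ω, (∃ x ∈ H, ∀ y, y ≠ w → y ≠ x → ℓ s(w, x) ω < ℓ s(w, y) ω) ↔
      L ω ∈ SimpleGraph.minEdgeInto w H := fun _ ω => (SimpleGraph.mem_minEdgeInto (g := L ω)).symm
  have hEX : ∀ w, ∫ ω, X w ω ∂μ = (μ.map L).real (SimpleGraph.minEdgeInto w H) := fun w =>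
    integral_ite_eq_measureReal_map hL (SimpleGraph.measurableSet_minEdgeInto w H) (hmem w)
  have hEXX : ∫ ω, X u ω * X v ω ∂μ =
      (μ.map L).real (SimpleGraph.minEdgeInto u H ∩ SimpleGraph.minEdgeInto v H) := by
    simp only [X, ite_zero_mul_ite_zero, mul_one]
    exact integral_ite_eq_measureReal_map hL ((SimpleGraph.measurableSet_minEdgeInto u H).inter
      (SimpleGraph.measurableSet_minEdgeInto v H)) fun ω => and_congr (hmem u ω) (hmem v ω)
  rw [hEXX, hEX, hEX, SimpleGraph.measureReal_minEdgeInto_inter_minEdgeInto hν hinj huv hu hv,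
    SimpleGraph.measureReal_minEdgeInto hν hinj subset_union_left hu,
    SimpleGraph.measureReal_minEdgeInto hν hinj subset_union_right hv, hHcard, Fintype.card_fin]
  have hn : (2 : ℝ) ≤ n := by
    have := Fin.val_ne_of_ne huv
    exact_mod_cast (by omega : 2 ≤ n)
  have hcov : 2 * (h : ℝ) ^ 2 / ((2 * n - 3) * (n - 1)) - h / (n - 1) * (h / (n - 1)) =
      h ^ 2 / ((n - 1) ^ 2 * (2 * n - 3)) := by
    field_simp [show (2 : ℝ) * n - 3 ≠ 0 by linarith]
    ring
  have hh0 : (0 : ℝ) < h := by exact_mod_cast hh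
  refine ⟨hcov, hcov ▸ div_pos (by positivity) (by nlinarith), hcov.trans ?_⟩
  field_simp
end

section
/- Let (G_n) be finite graphs with |V(G_n)| → ∞ admitting a locally finite local weak limit (in the Benjamini–Schramm sense), and let (H_n) be random graphs on the same vertex sets with P(|E(G_n) △ E(H_n)| ≤ t_n) → 1 for some t_n = o(|V(G_n)|). Then (H_n) has the same local weak limit as (G_n). -/
/-
A root `o` can only tell `G` and `H` apart within radius `r` if its `r`-ball in `G` contains an
endpoint of an edge of `E(G) △ E(H)`. By local finiteness, roots whose `2r`-ball has more than
`M` vertices form a fraction at most `ε`. Every other bad root lies within distance `r` of one of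
the at most `2 |E(G) △ E(H)|` endpoints, and each endpoint is that close to at most `M` such
roots, since by the triangle inequality they all lie in the `2r`-ball of any one of them. Hence,
on the event `|E(G) △ E(H)| ≤ t`, the fraction of bad roots is at most `ε + 2 M t / |V|`.
-/

open MeasureTheory Filter

theorem Set.Finite.ncard_biUnion_le_ncard_mul {ι α : Type*} {t : Set ι} (ht : t.Finite)
    (s : ι → Set α) {m : ℕ} (hs : ∀ i ∈ t, (s i).ncard ≤ m) :
    (⋃ i ∈ t, s i).ncard ≤ t.ncard * m := by
  calc (⋃ i ∈ t, s i).ncard = (⋃ i ∈ ht.toFinset, s i).ncard := by simp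
    _ ≤ ∑ i ∈ ht.toFinset, (s i).ncard := ht.toFinset.set_ncard_biUnion_le s
    _ ≤ ht.toFinset.card * m := Finset.sum_le_card_nsmul _ _ _ (by simpa using hs)
    _ = t.ncard * m := by rw [Set.ncard_eq_toFinset_card t ht]

theorem Sym2.ncard_setOf_mem_le {α : Type*} (e : Sym2 α) : {a | a ∈ e}.ncard ≤ 2 := by
  induction e with
  | _ a b =>
    rw [show {c | c ∈ s(a, b)} = {a, b} by ext; simp]
    exact (Set.ncard_insert_le a {b}).trans (by simp)

namespace SimpleGraph

variable {V : Type*}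

/-- The `Reachable` conjunct is needed because `dist` is `0` between unreachable vertices. -/
def closedBall (G : SimpleGraph V) (o : V) (r : ℕ) : Set V :=
  {x | G.Reachable o x ∧ G.dist o x ≤ r}

/-- The roots `o` at which the rooted `r`-balls of `G` and `H` are equal as rooted graphs. -/
def ballAgreeSet (G H : SimpleGraph V) (r : ℕ) : Set V :=
  {o | (∀ x, x ∈ G.closedBall o r ↔ x ∈ H.closedBall o r) ∧
    ∀ x y, G.Reachable o x → G.dist o x ≤ r → G.Reachable o y → G.dist o y ≤ r →
      (G.Adj x y ↔ H.Adj x y)}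

def symmDiffVerts (G H : SimpleGraph V) : Set V :=
  ⋃ e ∈ symmDiff G.edgeSet H.edgeSet, {v | v ∈ e}

variable {G H : SimpleGraph V} {o v : V} {r : ℕ}

theorem mem_closedBall_of_mem_of_mem {o' : V} {s : ℕ} (h : v ∈ G.closedBall o r)
    (h' : v ∈ G.closedBall o' s) : o' ∈ G.closedBall o (r + s) :=
  ⟨h.1.trans h'.1.symm,
    (h.1.dist_triangle_left o').trans (by rw [dist_comm (u := v)]; exact add_le_add h.2 h'.2)⟩

theorem ncard_setOf_mem_closedBall_le [Finite V] (G : SimpleGraph V) (v : V) (r M : ℕ) :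
    {o | v ∈ G.closedBall o r ∧ (G.closedBall o (2 * r)).ncard ≤ M}.ncard ≤ M := by
  rcases Set.eq_empty_or_nonempty
    {o | v ∈ G.closedBall o r ∧ (G.closedBall o (2 * r)).ncard ≤ M} with h | ⟨o₀, hv₀, hM₀⟩
  · simp [h]
  · refine (Set.ncard_le_ncard (fun o ho => ?_) (Set.toFinite _)).trans hM₀
    rw [two_mul]
    exact mem_closedBall_of_mem_of_mem hv₀ ho.1

theorem adj_iff_of_notMem_symmDiffVerts (hv : v ∉ G.symmDiffVerts H) (w : V) :
    G.Adj v w ↔ H.Adj v w := by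
  by_contra hvw
  refine hv (Set.mem_biUnion (x := s(v, w)) ?_ (Sym2.mem_mk_left v w))
  rw [Set.mem_symmDiff, mem_edgeSet, mem_edgeSet]
  tauto

theorem ncard_symmDiffVerts_le [Finite V] (G H : SimpleGraph V) :
    (G.symmDiffVerts H).ncard ≤ 2 * (symmDiff G.edgeSet H.edgeSet).ncard := by
  rw [mul_comm]
  exact (Set.toFinite _).ncard_biUnion_le_ncard_mul _ fun e _ => e.ncard_setOf_mem_le

section agreement

variable (hagree : ∀ v ∈ G.closedBall o r, ∀ w, G.Adj v w ↔ H.Adj v w)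
include hagree

theorem closedBall_subset_of_adj_iff : G.closedBall o r ⊆ H.closedBall o r := by
  classical
  rintro x ⟨hreach, hdist⟩
  obtain ⟨p, hp⟩ := hreach.exists_walk_length_eq_dist
  have hedges : ∀ e ∈ p.edges, e ∈ H.edgeSet := by
    intro e he
    induction e with
    | _ a b =>
      have ha := p.fst_mem_support_of_mem_edges he
      have ha' : a ∈ G.closedBall o r := ⟨⟨p.takeUntil a ha⟩,
        (dist_le _).trans ((p.length_takeUntil_le_length ha).trans (hp ▸ hdist))⟩
      exact (hagree a ha' b).1 (p.adj_of_mem_edges he)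
  let q := p.transfer H hedges
  exact ⟨⟨q⟩, (dist_le q).trans (by rwa [Walk.length_transfer, hp])⟩

/-- An `H`-walk that starts inside the `G`-ball keeps following `G`-edges, since each of its
vertices is reached from `o` by a `G`-walk of length at most `r`. -/
theorem exists_walk_of_adj_iff {u x : V} (q : H.Walk u x) (p : G.Walk o u)
    (hlen : p.length + q.length ≤ r) : ∃ p' : G.Walk o x, p'.length ≤ r := by
  induction q with
  | nil => exact ⟨p, by simpa using hlen⟩
  | cons hadj q ih =>
    rw [Walk.length_cons] at hlen
    have hu : G.Adj _ _ := (hagree _ ⟨⟨p⟩, (dist_le p).trans (by omega)⟩ _).2 hadj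
    exact ih (p.concat hu) (by rw [Walk.length_concat]; omega)

theorem closedBall_eq_of_adj_iff : G.closedBall o r = H.closedBall o r := by
  refine (closedBall_subset_of_adj_iff hagree).antisymm ?_
  rintro x ⟨hreach, hdist⟩
  obtain ⟨q, hq⟩ := hreach.exists_walk_length_eq_dist
  obtain ⟨p, hp⟩ := exists_walk_of_adj_iff hagree q Walk.nil (by simpa [hq] using hdist)
  exact ⟨⟨p⟩, (dist_le p).trans hp⟩

theorem mem_ballAgreeSet_of_adj_iff : o ∈ G.ballAgreeSet H r :=
  ⟨Set.ext_iff.1 (closedBall_eq_of_adj_iff hagree), fun x y hx hx' _ _ => hagree x ⟨hx, hx'⟩ y⟩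

end agreement

theorem ncard_compl_ballAgreeSet_le [Finite V] (G H : SimpleGraph V) (r M : ℕ) :
    (G.ballAgreeSet H r)ᶜ.ncard ≤
      {o | M < (G.closedBall o (2 * r)).ncard}.ncard +
        2 * M * (symmDiff G.edgeSet H.edgeSet).ncard := by
  have hcover : (G.ballAgreeSet H r)ᶜ ⊆ {o | M < (G.closedBall o (2 * r)).ncard} ∪
      ⋃ v ∈ G.symmDiffVerts H,
        {o | v ∈ G.closedBall o r ∧ (G.closedBall o (2 * r)).ncard ≤ M} := by
    intro o ho
    by_cases hM : M < (G.closedBall o (2 * r)).ncard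
    · exact Or.inl hM
    by_cases hS : ∃ v ∈ G.symmDiffVerts H, v ∈ G.closedBall o r
    · obtain ⟨v, hvS, hv⟩ := hS
      exact Or.inr (Set.mem_biUnion hvS ⟨hv, not_lt.1 hM⟩)
    · exact absurd (mem_ballAgreeSet_of_adj_iff fun v hv =>
        adj_iff_of_notMem_symmDiffVerts fun hvS => hS ⟨v, hvS, hv⟩) ho
  calc (G.ballAgreeSet H r)ᶜ.ncard
      ≤ {o | M < (G.closedBall o (2 * r)).ncard}.ncard + (G.symmDiffVerts H).ncard * M :=
        (Set.ncard_le_ncard hcover (Set.toFinite _)).trans <| (Set.ncard_union_le _ _).trans <|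
          Nat.add_le_add_left ((Set.toFinite _).ncard_biUnion_le_ncard_mul _
            fun v _ => G.ncard_setOf_mem_closedBall_le v r M) _
    _ ≤ _ := by
        have := Nat.mul_le_mul_right M (ncard_symmDiffVerts_le G H)
        linarith

theorem one_sub_le_ncard_ballAgreeSet_div [Fintype V] [Nonempty V] (G H : SimpleGraph V)
    {r M t : ℕ} {ε : ℝ}
    (hsparse : ({o | M < (G.closedBall o (2 * r)).ncard}.ncard : ℝ) / Fintype.card V ≤ ε)
    (hΔ : (symmDiff G.edgeSet H.edgeSet).ncard ≤ t) :
    1 - ε - 2 * M * (t / Fintype.card V) ≤ ((G.ballAgreeSet H r).ncard : ℝ) / Fintype.card V := by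
  have hN : (0 : ℝ) < Fintype.card V := by exact_mod_cast Fintype.card_pos
  have hsum :
      ((G.ballAgreeSet H r).ncard : ℝ) + (G.ballAgreeSet H r)ᶜ.ncard = Fintype.card V := by
    exact_mod_cast (Set.ncard_add_ncard_compl _).trans Nat.card_eq_fintype_card
  have hcompl : ((G.ballAgreeSet H r)ᶜ.ncard : ℝ) ≤
      {o | M < (G.closedBall o (2 * r)).ncard}.ncard + 2 * M * t := by
    exact_mod_cast (ncard_compl_ballAgreeSet_le G H r M).trans (by gcongr)
  rw [div_le_iff₀ hN] at hsparse
  rw [le_div_iff₀ hN, sub_mul, sub_mul, one_mul, mul_assoc, div_mul_cancel₀ _ hN.ne']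
  linarith

theorem measurable_comp_of_measurableSet_adj {Ω β : Type*} [MeasurableSpace Ω]
    [MeasurableSpace β] [Finite V] {H : Ω → SimpleGraph V}
    (hH : ∀ x y, MeasurableSet {ω | (H ω).Adj x y}) (φ : SimpleGraph V → β) :
    Measurable fun ω => φ (H ω) := by
  have hfiber : ∀ g : SimpleGraph V, MeasurableSet {ω | H ω = g} := by
    intro g
    have : {ω | H ω = g} = ⋂ x, ⋂ y, {ω | (H ω).Adj x y ↔ g.Adj x y} := by
      ext ω
      simp [SimpleGraph.ext_iff, funext_iff]
    rw [this]
    refine .iInter fun x => .iInter fun y => ?_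
    by_cases hg : g.Adj x y
    · simpa [hg] using hH x y
    · simp only [hg, iff_false]
      exact (hH x y).compl
  intro s _
  rw [show (fun ω => φ (H ω)) ⁻¹' s = ⋃ g ∈ φ ⁻¹' s, {ω | H ω = g} by ext; simp]
  exact .biUnion (Set.to_countable _) fun g _ => hfiber g

end SimpleGraph

theorem MeasureTheory.measureReal_mul_le_integral {Ω : Type*} [MeasurableSpace Ω]
    {μ : Measure Ω} [IsFiniteMeasure μ] {f : Ω → ℝ} {s : Set Ω} (hs : MeasurableSet s)
    (hf : Integrable f μ) (hf₀ : 0 ≤ f) {a : ℝ} (ha : ∀ ω ∈ s, a ≤ f ω) :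
    μ.real s * a ≤ ∫ ω, f ω ∂μ :=
  calc μ.real s * a = ∫ _ in s, a ∂μ := by rw [setIntegral_const, smul_eq_mul]
    _ ≤ ∫ ω in s, f ω ∂μ := setIntegral_mono_on (integrableOn_const) hf.integrableOn hs ha
    _ ≤ ∫ ω, f ω ∂μ := setIntegral_le_integral hf (Eventually.of_forall hf₀)

theorem tendsto_of_le_of_forall_tendsto_sub_le {α : Type*} {l : Filter α} {f : α → ℝ} {L : ℝ}
    (hle : ∀ a, f a ≤ L)
    (hlow : ∀ ε > 0, ∃ g : α → ℝ, Tendsto g l (nhds (L - ε)) ∧ ∀ a, g a ≤ f a) :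
    Tendsto f l (nhds L) := by
  refine tendsto_order.2 ⟨fun c hc => ?_, fun c hc => .of_forall fun a => (hle a).trans_lt hc⟩
  obtain ⟨g, hg, hgf⟩ := hlow ((L - c) / 2) (by linarith)
  exact (hg.eventually (lt_mem_nhds (by linarith))).mono fun a ha => ha.trans_le (hgf a)

theorem stmt_17_general
    (V : ℕ → Type) [∀ n, Fintype (V n)] [∀ n, Nonempty (V n)]
    (G : ∀ n, SimpleGraph (V n))
    (Ω : ℕ → Type) [∀ n, MeasurableSpace (Ω n)]
    (μ : ∀ n, Measure (Ω n)) [∀ n, IsProbabilityMeasure (μ n)]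
    (H : ∀ n, Ω n → SimpleGraph (V n))
    (hmeasAdj : ∀ n (x y : V n), MeasurableSet {ω | (H n ω).Adj x y})
    (hlocfin : ∀ r : ℕ, ∀ ε : ℝ, 0 < ε → ∃ M : ℕ, ∀ n,
      (Set.ncard {o : V n |
          M < Set.ncard {x : V n | (G n).Reachable o x ∧ (G n).dist o x ≤ r}} : ℝ)
        / Fintype.card (V n) ≤ ε)
    (t : ℕ → ℕ)
    (ht : Tendsto (fun n => (t n : ℝ) / Fintype.card (V n)) atTop (nhds 0))
    (hΔ : Tendsto (fun n =>
        μ n {ω | Set.ncard (symmDiff ((G n).edgeSet) ((H n ω).edgeSet)) ≤ t n})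
      atTop (nhds (1 : ENNReal))) :
    ∀ r : ℕ, Tendsto (fun n =>
        ∫ ω, ((Set.ncard {o : V n |
            (∀ x : V n, ((G n).Reachable o x ∧ (G n).dist o x ≤ r) ↔
              ((H n ω).Reachable o x ∧ (H n ω).dist o x ≤ r)) ∧
            (∀ x y : V n,
              (G n).Reachable o x → (G n).dist o x ≤ r →
              (G n).Reachable o y → (G n).dist o y ≤ r →
              ((G n).Adj x y ↔ (H n ω).Adj x y))} : ℝ)
          / Fintype.card (V n)) ∂(μ n))
      atTop (nhds (1 : ℝ)) := by
  intro r
  set F : ∀ n, SimpleGraph (V n) → ℝ :=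
    fun n g => ((G n).ballAgreeSet g r).ncard / Fintype.card (V n)
  change Tendsto (fun n => ∫ ω, F n (H n ω) ∂(μ n)) atTop (nhds 1)
  have hF₀ : ∀ n g, 0 ≤ F n g := fun n g => by positivity
  have hF₁ : ∀ n g, F n g ≤ 1 := fun n g => div_le_one_of_le₀
    (by exact_mod_cast (Set.ncard_le_card _).trans_eq Nat.card_eq_fintype_card) (by positivity)
  have hint : ∀ n, Integrable (fun ω => F n (H n ω)) (μ n) := fun n =>
    .of_bound
      (SimpleGraph.measurable_comp_of_measurableSet_adj (hmeasAdj n) (F n)).aestronglyMeasurable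
      1 (.of_forall fun ω => by rw [Real.norm_of_nonneg (hF₀ n _)]; exact hF₁ n _)
  refine tendsto_of_le_of_forall_tendsto_sub_le (fun n => ?_) fun ε hε => ?_
  · simpa using integral_mono (hint n) (integrable_const 1) fun ω => hF₁ n (H n ω)
  obtain ⟨M, hM⟩ := hlocfin (2 * r) ε hε
  set E := fun n => {ω | (symmDiff (G n).edgeSet (H n ω).edgeSet).ncard ≤ t n}
  have hE : ∀ n, MeasurableSet (E n) := fun n => measurableSet_setOfPred.2 <|
    SimpleGraph.measurable_comp_of_measurableSet_adj (hmeasAdj n)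
      fun g => (symmDiff (G n).edgeSet g.edgeSet).ncard ≤ t n
  have hμE : Tendsto (fun n => (μ n).real (E n)) atTop (nhds 1) :=
    (ENNReal.tendsto_toReal ENNReal.one_ne_top).comp hΔ
  refine ⟨fun n => (μ n).real (E n) * (1 - ε - 2 * M * (t n / Fintype.card (V n))), ?_,
    fun n => measureReal_mul_le_integral (hE n) (hint n) (fun ω => hF₀ n _)
      fun ω hω => (G n).one_sub_le_ncard_ballAgreeSet_div (H n ω) (hM n) hω⟩
  simpa using hμE.mul (tendsto_const_nhds (x := 1 - ε) |>.sub (ht.const_mul (2 * (M : ℝ))))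

theorem stmt_17
    (V : ℕ → Type) [∀ n, Fintype (V n)] [∀ n, Nonempty (V n)]
    (G : ∀ n, SimpleGraph (V n))
    (Ω : ℕ → Type) [∀ n, MeasurableSpace (Ω n)]
    (μ : ∀ n, Measure (Ω n)) [∀ n, IsProbabilityMeasure (μ n)]
    (H : ∀ n, Ω n → SimpleGraph (V n))
    (hmeasAdj : ∀ n (x y : V n), MeasurableSet {ω | (H n ω).Adj x y})
    (hcard : Tendsto (fun n => (Fintype.card (V n) : ℝ)) atTop atTop)
    (hlocfin : ∀ r : ℕ, ∀ ε : ℝ, 0 < ε → ∃ M : ℕ, ∀ n,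
      (Set.ncard {o : V n |
          M < Set.ncard {x : V n | (G n).Reachable o x ∧ (G n).dist o x ≤ r}} : ℝ)
        / Fintype.card (V n) ≤ ε)
    (t : ℕ → ℕ)
    (ht : Tendsto (fun n => (t n : ℝ) / Fintype.card (V n)) atTop (nhds 0))
    (hΔ : Tendsto (fun n =>
        μ n {ω | Set.ncard (symmDiff ((G n).edgeSet) ((H n ω).edgeSet)) ≤ t n})
      atTop (nhds (1 : ENNReal))) :
    ∀ r : ℕ, Tendsto (fun n =>
        ∫ ω, ((Set.ncard {o : V n |
            (∀ x : V n, ((G n).Reachable o x ∧ (G n).dist o x ≤ r) ↔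
              ((H n ω).Reachable o x ∧ (H n ω).dist o x ≤ r)) ∧
            (∀ x y : V n,
              (G n).Reachable o x → (G n).dist o x ≤ r →
              (G n).Reachable o y → (G n).dist o y ≤ r →
              ((G n).Adj x y ↔ (H n ω).Adj x y))} : ℝ)
          / Fintype.card (V n)) ∂(μ n))
      atTop (nhds (1 : ℝ)) :=
  stmt_17_general V G Ω μ H hmeasAdj hlocfin t ht hΔ
end
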